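/- arXiv:2605.23104 — 5 statements merged into one kernel-verified Lean document; each statement's English description precedes it below -/
import Mathlib

section
/- Let p ∈ (0,1) and δ > 0. Let X₁,…,Xₙ ∈ {0,1} be random variables such that for every i ∈ [n] and every a₁,…,a_{i-1} ∈ {0,1} with ∑_{t<i} aₜ < (1+δ)·p·n, we have Pr[Xᵢ = 1 | X₁=a₁,…,X_{i-1}=a_{i-1}] ≤ p. Let X = ∑ᵢ Xᵢ. Then Pr[X ≥ (1+δ)·p·n] ≤ 2·exp(−(δ²/(2+δ))·p·n). -/
/-!
Let `S i` count the ones among the first `i` bits and `m = ⌈(1+δ)pn⌉`. The stopped exponential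
moment `E[(1+δ) ^ min (S i) m]` grows by a factor of at most `1 + pδ` per bit: the exponent can
only increase while `S i < m`, i.e. along histories where the next bit is `1` with conditional
probability at most `p`. So the moment at time `n` is at most `(1+pδ)^n ≤ exp(pδn)`, and Markov's
inequality for the event `S n ≥ m` bounds its probability by `exp(pδn) / (1+δ)^m`, which is at most
`exp(-((1+δ) log(1+δ) - δ) pn) ≤ exp(-δ²pn / (2+δ))` since `log(1+δ) ≥ 2δ / (2+δ)`.
-/

open Finset

open Classical in
noncomputable def prob {Ω : Type*} [Fintype Ω] (μ : Ω → ℝ) (E : Set Ω) : ℝ :=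
  ∑ ω, if ω ∈ E then μ ω else 0

section Fiberwise

variable {Ω β : Type*} [Fintype Ω] [Fintype β] [DecidableEq β]

theorem sum_mul_ite_comp_eq_sum_mul_prob (μ : Ω → ℝ) (P : Ω → Prop) [DecidablePred P]
    (h : Ω → β) (g : β → ℝ) :
    ∑ ω, μ ω * (if P ω then g (h ω) else 0) = ∑ b, g b * prob μ {ω | P ω ∧ h ω = b} := by
  simp only [prob, Finset.mul_sum, Set.mem_ofPred_eq]
  rw [Finset.sum_comm]
  refine Finset.sum_congr rfl fun ω _ => ?_
  by_cases hω : P ω <;> simp [hω, mul_comm]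

theorem sum_mul_ite_comp_le_of_prob_fiber_le {μ : Ω → ℝ} {P : Ω → Prop} [DecidablePred P]
    {h : Ω → β} {g : β → ℝ} {p : ℝ} (hg : ∀ b, 0 ≤ g b)
    (hP : ∀ b, g b ≠ 0 → prob μ {ω | P ω ∧ h ω = b} ≤ p * prob μ {ω | h ω = b}) :
    ∑ ω, μ ω * (if P ω then g (h ω) else 0) ≤ p * ∑ ω, μ ω * g (h ω) := by
  have hall := sum_mul_ite_comp_eq_sum_mul_prob μ (fun _ => True) h g
  simp only [if_true, true_and] at hall
  rw [sum_mul_ite_comp_eq_sum_mul_prob, hall, Finset.mul_sum]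
  refine Finset.sum_le_sum fun b _ => ?_
  rcases eq_or_ne (g b) 0 with hb | hb
  · simp [hb]
  · calc g b * prob μ {ω | P ω ∧ h ω = b} ≤ g b * (p * prob μ {ω | h ω = b}) :=
          mul_le_mul_of_nonneg_left (hP b hb) (hg b)
      _ = p * (g b * prob μ {ω | h ω = b}) := by ring

end Fiberwise

theorem pow_mul_prob_le_sum_mul_pow_min {Ω : Type*} [Fintype Ω] {μ : Ω → ℝ} (hμ : ∀ ω, 0 ≤ μ ω)
    {r : ℝ} (hr : 0 ≤ r) (f : Ω → ℕ) (m : ℕ) :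
    r ^ m * prob μ {ω | m ≤ f ω} ≤ ∑ ω, μ ω * r ^ min (f ω) m := by
  rw [prob, Finset.mul_sum]
  refine Finset.sum_le_sum fun ω _ => ?_
  by_cases hω : m ≤ f ω
  · simp [hω, mul_comm]
  · simp only [Set.mem_ofPred_eq, hω, if_false, mul_zero]
    exact mul_nonneg (hμ ω) (pow_nonneg hr _)

theorem exp_mul_le_pow_mul_exp {δ s : ℝ} (hδ : 0 ≤ δ) (hs : 0 ≤ s) {m : ℕ}
    (hm : (1 + δ) * s ≤ m) :
    Real.exp (δ * s) ≤ (1 + δ) ^ m * Real.exp (-(δ ^ 2 / (2 + δ)) * s) := by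
  have hlog : 0 ≤ Real.log (1 + δ) := Real.log_nonneg (by linarith)
  have hexponent : δ ^ 2 / (2 + δ) ≤ (1 + δ) * Real.log (1 + δ) - δ := by
    have := mul_le_mul_of_nonneg_left (Real.le_log_one_add_of_nonneg hδ) (by linarith : 0 ≤ 1 + δ)
    have heq : (1 + δ) * (2 * δ / (δ + 2)) - δ = δ ^ 2 / (2 + δ) := by
      field_simp; ring
    linarith
  rw [← Real.exp_log (by linarith : 0 < 1 + δ), ← Real.exp_nat_mul, ← Real.exp_add,
    Real.exp_le_exp]
  nlinarith [mul_le_mul_of_nonneg_left hm hlog, mul_le_mul_of_nonneg_right hexponent hs]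

section Bits

variable {Ω : Type*} {n : ℕ}

def onesCount (a : Fin n → Bool) : ℕ := #{t | a t}

/-- The first `i` bits, padded with `false` so that histories of all lengths share one type. -/
def history (X : Fin n → Ω → Bool) (i : ℕ) (ω : Ω) : Fin n → Bool :=
  fun t => decide ((t : ℕ) < i) && X t ω

theorem onesCount_history_zero (X : Fin n → Ω → Bool) (ω : Ω) :
    onesCount (history X 0 ω) = 0 := by
  simp [onesCount, history]

theorem onesCount_history_self (X : Fin n → Ω → Bool) (ω : Ω) :
    onesCount (history X n ω) = #{t | X t ω} := by
  simp [onesCount, history]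

theorem onesCount_history_succ (X : Fin n → Ω → Bool) {i : ℕ} (hi : i < n) (ω : Ω) :
    onesCount (history X (i + 1) ω)
      = onesCount (history X i ω) + if X ⟨i, hi⟩ ω then 1 else 0 := by
  simp only [onesCount, Finset.card_filter]
  have hlast : (if X ⟨i, hi⟩ ω then 1 else 0)
      = ∑ t : Fin n, if t = ⟨i, hi⟩ then (if X t ω then 1 else 0) else 0 := by simp
  rw [hlast, ← Finset.sum_add_distrib]
  refine Finset.sum_congr rfl fun t _ => ?_
  rcases lt_trichotomy (t : ℕ) i with h | h | h
  · have : t ≠ ⟨i, hi⟩ := Fin.ne_of_val_ne h.ne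
    simp [history, h, this, Nat.lt_succ_of_lt h]
  · have : t = ⟨i, hi⟩ := Fin.ext h
    subst this
    simp [history]
  · have : t ≠ ⟨i, hi⟩ := Fin.ne_of_val_ne h.ne'
    simp [history, this, not_lt_of_gt h, Nat.not_lt.mpr h]

theorem history_eq_iff {X : Fin n → Ω → Bool} {i : Fin n} {a : Fin n → Bool}
    (ha : ∀ t, i ≤ t → a t = false) (ω : Ω) :
    history X i ω = a ↔ ∀ t, t < i → X t ω = a t := by
  refine ⟨fun h t ht => ?_, fun h => funext fun t => ?_⟩
  · simpa [history, Fin.lt_def.mp ht] using congrFun h t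
  · by_cases ht : t < i
    · simpa [history, Fin.lt_def.mp ht] using h t ht
    · simp [history, Fin.lt_def.not.mp ht, ha t (not_lt.mp ht)]

theorem history_ne {X : Fin n → Ω → Bool} {i : ℕ} {a : Fin n → Bool} {t : Fin n}
    (hit : i ≤ t) (hat : a t = true) (ω : Ω) : history X i ω ≠ a := by
  intro h
  simpa [history, not_lt.mpr hit, hat] using congrFun h t

variable [Fintype Ω]

theorem prob_history_le_of_prefix_le {μ : Ω → ℝ} {X : Fin n → Ω → Bool} {p τ : ℝ}
    (hcond : ∀ (i : Fin n) (a : Fin n → Bool),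
      (∑ t ∈ Finset.univ.filter (fun t => t < i), (if a t then (1:ℝ) else 0)) < τ →
      prob μ {ω | X i ω = true ∧ ∀ t, t < i → X t ω = a t}
        ≤ p * prob μ {ω | ∀ t, t < i → X t ω = a t})
    {i : ℕ} (hi : i < n) (a : Fin n → Bool) (ha : (onesCount a : ℝ) < τ) :
    prob μ {ω | X ⟨i, hi⟩ ω = true ∧ history X i ω = a} ≤ p * prob μ {ω | history X i ω = a} := by
  by_cases htrunc : ∀ t, ⟨i, hi⟩ ≤ t → a t = false
  · have hsum : (∑ t ∈ Finset.univ.filter (fun t => t < ⟨i, hi⟩), (if a t then (1:ℝ) else 0))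
        = onesCount a := by
      rw [Finset.sum_boole, onesCount, Finset.filter_filter]
      congr 2
      ext t
      simp only [Finset.mem_filter, Finset.mem_univ, true_and, and_iff_right_iff_imp]
      intro hat
      by_contra hlt
      simp [htrunc t (not_lt.mp hlt)] at hat
    simpa only [history_eq_iff htrunc] using hcond ⟨i, hi⟩ a (hsum ▸ ha)
  · obtain ⟨t, hit, hat⟩ : ∃ t, ⟨i, hi⟩ ≤ t ∧ a t = true := by simpa using htrunc
    simp [history_ne (X := X) hit hat, prob]

def stoppedMoment (μ : Ω → ℝ) (X : Fin n → Ω → Bool) (r : ℝ) (m i : ℕ) : ℝ :=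
  ∑ ω, μ ω * r ^ min (onesCount (history X i ω)) m

theorem stoppedMoment_zero {μ : Ω → ℝ} (hμ : ∑ ω, μ ω = 1) (X : Fin n → Ω → Bool) (r : ℝ)
    (m : ℕ) : stoppedMoment μ X r m 0 = 1 := by
  simp [stoppedMoment, onesCount_history_zero, hμ]

theorem stoppedMoment_succ_le {μ : Ω → ℝ} (hμ : ∀ ω, 0 ≤ μ ω) {X : Fin n → Ω → Bool}
    {p δ : ℝ} (hp : 0 ≤ p) (hδ : 0 ≤ δ) {m i : ℕ} (hi : i < n)
    (hcond : ∀ a, onesCount a < m →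
      prob μ {ω | X ⟨i, hi⟩ ω = true ∧ history X i ω = a} ≤ p * prob μ {ω | history X i ω = a}) :
    stoppedMoment μ X (1 + δ) m (i + 1) ≤ (1 + p * δ) * stoppedMoment μ X (1 + δ) m i := by
  set g : (Fin n → Bool) → ℝ := fun a => if onesCount a < m then (1 + δ) ^ onesCount a else 0
  have hg : ∀ a, 0 ≤ g a := fun a => by positivity
  have hpoint : ∀ ω, (1 + δ) ^ min (onesCount (history X (i + 1) ω)) m
      = (1 + δ) ^ min (onesCount (history X i ω)) m
        + δ * if X ⟨i, hi⟩ ω then g (history X i ω) else 0 := by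
    intro ω
    rw [onesCount_history_succ X hi ω]
    by_cases hX : X ⟨i, hi⟩ ω
    · by_cases hm : onesCount (history X i ω) < m
      · simp [g, hX, hm, min_eq_left hm.le, pow_succ]
        ring
      · have hm' := not_lt.mp hm
        simp [g, hX, hm, min_eq_right hm', min_eq_right (Nat.le_succ_of_le hm')]
    · simp [hX]
  have hsplit : stoppedMoment μ X (1 + δ) m (i + 1) = stoppedMoment μ X (1 + δ) m i
      + δ * ∑ ω, μ ω * if X ⟨i, hi⟩ ω then g (history X i ω) else 0 := by
    simp only [stoppedMoment, hpoint, mul_add, Finset.sum_add_distrib, Finset.mul_sum]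
    ring_nf
  have hfiber : ∑ ω, μ ω * (if X ⟨i, hi⟩ ω then g (history X i ω) else 0)
      ≤ p * ∑ ω, μ ω * g (history X i ω) :=
    sum_mul_ite_comp_le_of_prob_fiber_le hg fun a ha => hcond a (by by_contra h; simp [g, h] at ha)
  have hdrop : ∑ ω, μ ω * g (history X i ω) ≤ stoppedMoment μ X (1 + δ) m i := by
    refine Finset.sum_le_sum fun ω _ => mul_le_mul_of_nonneg_left ?_ (hμ ω)
    by_cases hm : onesCount (history X i ω) < m
    · simp [g, hm, min_eq_left hm.le]
    · simp only [g, hm, if_false]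
      positivity
  calc stoppedMoment μ X (1 + δ) m (i + 1)
      ≤ stoppedMoment μ X (1 + δ) m i + δ * (p * stoppedMoment μ X (1 + δ) m i) := by
        rw [hsplit]
        gcongr
        exact hfiber.trans (mul_le_mul_of_nonneg_left hdrop hp)
    _ = (1 + p * δ) * stoppedMoment μ X (1 + δ) m i := by ring

theorem stoppedMoment_le_pow {μ : Ω → ℝ} (hμ0 : ∀ ω, 0 ≤ μ ω) (hμ1 : ∑ ω, μ ω = 1)
    {X : Fin n → Ω → Bool} {p δ : ℝ} (hp : 0 ≤ p) (hδ : 0 ≤ δ) {m : ℕ}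
    (hcond : ∀ i (hi : i < n) a, onesCount a < m →
      prob μ {ω | X ⟨i, hi⟩ ω = true ∧ history X i ω = a} ≤ p * prob μ {ω | history X i ω = a}) :
    ∀ i ≤ n, stoppedMoment μ X (1 + δ) m i ≤ (1 + p * δ) ^ i := by
  intro i
  induction i with
  | zero => intro _; simp [stoppedMoment_zero hμ1]
  | succ i ih =>
    intro hi
    calc stoppedMoment μ X (1 + δ) m (i + 1)
        ≤ (1 + p * δ) * stoppedMoment μ X (1 + δ) m i :=
          stoppedMoment_succ_le hμ0 hp hδ hi (hcond i hi)
      _ ≤ (1 + p * δ) * (1 + p * δ) ^ i := by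
          gcongr
          exact ih (by omega)
      _ = (1 + p * δ) ^ (i + 1) := by ring

end Bits

theorem chernoff_conditionally_bounded_general
    {Ω : Type*} [Fintype Ω] (μ : Ω → ℝ)
    (hμ0 : ∀ ω, 0 ≤ μ ω) (hμ1 : ∑ ω, μ ω = 1)
    {n : ℕ} (p δ : ℝ) (hp0 : 0 < p) (hδ : 0 < δ)
    (X : Fin n → Ω → Bool)
    (hcond : ∀ (i : Fin n) (a : Fin n → Bool),
      ((∑ t ∈ Finset.univ.filter (fun t => t < i), (if a t then (1:ℝ) else 0))
          < (1 + δ) * p * n) →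
      prob μ {ω | X i ω = true ∧ ∀ t, t < i → X t ω = a t}
        ≤ p * prob μ {ω | ∀ t, t < i → X t ω = a t}) :
    prob μ {ω | (1 + δ) * p * n ≤ ∑ i, (if X i ω then (1:ℝ) else 0)}
      ≤ 2 * Real.exp (-(δ ^ 2 / (2 + δ)) * p * n) := by
  set m := ⌈(1 + δ) * p * n⌉₊
  have hcond_history : ∀ i (hi : i < n) a, onesCount a < m →
      prob μ {ω | X ⟨i, hi⟩ ω = true ∧ history X i ω = a}
        ≤ p * prob μ {ω | history X i ω = a} := fun i hi a ha =>
    prob_history_le_of_prefix_le hcond hi a (Nat.lt_ceil.mp ha)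
  have hevent : {ω | (1 + δ) * p * n ≤ ∑ i, (if X i ω then (1:ℝ) else 0)}
      = {ω | m ≤ onesCount (history X n ω)} := by
    ext ω
    simp [m, Nat.ceil_le, onesCount_history_self]
  have hmoment := stoppedMoment_le_pow hμ0 hμ1 hp0.le hδ.le hcond_history n le_rfl
  have hmarkov := pow_mul_prob_le_sum_mul_pow_min hμ0 (by positivity : (0:ℝ) ≤ 1 + δ)
    (fun ω => onesCount (history X n ω)) m
  have hexp := exp_mul_le_pow_mul_exp hδ.le (by positivity : 0 ≤ p * n)
    (by rw [← mul_assoc]; exact Nat.le_ceil _)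
  have hpow : (1 + p * δ) ^ n ≤ Real.exp (δ * (p * n)) := by
    calc (1 + p * δ) ^ n ≤ Real.exp (p * δ) ^ n := by
          gcongr
          linarith [Real.add_one_le_exp (p * δ)]
      _ = Real.exp (δ * (p * n)) := by rw [← Real.exp_nat_mul]; ring_nf
  have hprob : prob μ {ω | m ≤ onesCount (history X n ω)}
      ≤ Real.exp (-(δ ^ 2 / (2 + δ)) * (p * n)) := by
    refine le_of_mul_le_mul_left ?_ (by positivity : (0:ℝ) < (1 + δ) ^ m)
    exact hmarkov.trans (hmoment.trans (hpow.trans hexp))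
  rw [hevent, mul_assoc (-(δ ^ 2 / (2 + δ)))]
  linarith [Real.exp_pos (-(δ ^ 2 / (2 + δ)) * (p * n))]

/-- **Chernoff bound for conditionally bounded bits.**
If `X₁,…,Xₙ ∈ {0,1}` satisfy: for every `i` and every history `a` of the previous
bits with running sum below `(1+δ)pn`, the conditional probability that `Xᵢ = 1`
given this history is at most `p`, then
`Pr[∑ Xᵢ ≥ (1+δ)pn] ≤ 2·exp(−(δ²/(2+δ))·pn)`.
The conditional-probability bound is stated multiplicatively:
`Pr[Xᵢ = 1 ∧ history] ≤ p · Pr[history]`. -/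
theorem chernoff_conditionally_bounded
    {Ω : Type*} [Fintype Ω] (μ : Ω → ℝ)
    (hμ0 : ∀ ω, 0 ≤ μ ω) (hμ1 : ∑ ω, μ ω = 1)
    {n : ℕ} (p δ : ℝ) (hp0 : 0 < p) (hp1 : p < 1) (hδ : 0 < δ)
    (X : Fin n → Ω → Bool)
    (hcond : ∀ (i : Fin n) (a : Fin n → Bool),
      ((∑ t ∈ Finset.univ.filter (fun t => t < i), (if a t then (1:ℝ) else 0))
          < (1 + δ) * p * n) →
      prob μ {ω | X i ω = true ∧ ∀ t, t < i → X t ω = a t}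
        ≤ p * prob μ {ω | ∀ t, t < i → X t ω = a t}) :
    prob μ {ω | (1 + δ) * p * n ≤ ∑ i, (if X i ω then (1:ℝ) else 0)}
      ≤ 2 * Real.exp (-(δ ^ 2 / (2 + δ)) * p * n) :=
  chernoff_conditionally_bounded_general μ hμ0 hμ1 p δ hp0 hδ X hcond
end

section
/- Let X → Y → X̃ be a Markov chain of discrete random variables with X, X̃ taking values in a finite set 𝒳. For each x ∈ 𝒳 let 𝒜ₓ ⊆ 𝒳 be a set of 'approximations' satisfying: (i) x ∈ 𝒜ₓ for each x, and (ii) x' ∈ 𝒜ₓ iff x ∈ 𝒜ₓ' for all x, x'. Let p_e = Pr[X̃ ∉ 𝒜_X] and let H(p_e) denote the binary entropy of p_e. Then p_e·log|𝒳| + (1−p_e)·sup_x log|𝒜ₓ| + H(p_e) ≥ H(X | Y). -/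
open Finset

-- Shannon entropy (base 2) of a random variable `X` on a finite probability space.
noncomputable def entropy {Ω α : Type*} [Fintype Ω] (μ : Ω → ℝ) (X : Ω → α) : ℝ :=
  -∑ ω, μ ω * Real.logb 2 (prob μ {ω' | X ω' = X ω})

-- Conditional entropy `H(X | Y) = H(X,Y) − H(Y)`.
noncomputable def condEntropy {Ω α β : Type*} [Fintype Ω] (μ : Ω → ℝ)
    (X : Ω → α) (Y : Ω → β) : ℝ :=
  entropy μ (fun ω => (X ω, Y ω)) - entropy μ Y

-- Binary entropy function (base 2).
noncomputable def binEnt (x : ℝ) : ℝ :=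
  -(x * Real.logb 2 x) - (1 - x) * Real.logb 2 (1 - x)

/-!
The Markov property gives `P(X = x | Y = y) = P(X = x | Y = y, X̃ = z)` on the support, hence
`H(X | Y) = H(X | Y, X̃)`. Gibbs' inequality bounds `H(X | W)` by the cross entropy
`E[-log q(X | W)]` for every sub-probability kernel `q` that is positive on the support. Take
`W = (Y, X̃)` and `q(x | z) = (1 - pₑ) / |𝒜_z|` for `x ∈ 𝒜_z`, `q(x | z) = pₑ / |𝒳|` otherwise.
By symmetry the error event is `X ∉ 𝒜_X̃`, so `-log q(X | W)` equals `log |𝒳| - log pₑ` on it and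
is at most `sup_x log |𝒜_x| - log (1 - pₑ)` off it; taking expectations gives the bound.
-/
open Real

theorem sum_mul_logb_nonpos {ι : Type*} {b : ℝ} (hb : 1 < b) (s : Finset ι) {w a : ι → ℝ}
    (hw : ∀ i ∈ s, 0 ≤ w i) (ha : ∀ i ∈ s, w i ≠ 0 → 0 < a i)
    (hwa : ∑ i ∈ s, w i * a i ≤ ∑ i ∈ s, w i) :
    ∑ i ∈ s, w i * logb b (a i) ≤ 0 := by
  have hlog : ∑ i ∈ s, w i * log (a i) ≤ ∑ i ∈ s, (w i * a i - w i) := by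
    refine sum_le_sum fun i hi => ?_
    rcases eq_or_ne (w i) 0 with h | h
    · simp [h]
    · have := log_le_sub_one_of_pos (ha i hi h)
      nlinarith [hw i hi]
  rw [sum_sub_distrib] at hlog
  simp_rw [logb, mul_div_assoc', ← sum_div]
  exact div_nonpos_of_nonpos_of_nonneg (by linarith) (log_nonneg hb.le)

section FiniteProbability

variable {Ω α β γ δ : Type*} [Fintype Ω] {μ : Ω → ℝ}

theorem prob_nonneg (hμ : ∀ ω, 0 ≤ μ ω) (E : Set Ω) : 0 ≤ prob μ E :=
  sum_nonneg fun ω _ => by split_ifs <;> simp [hμ]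

theorem single_le_prob (hμ : ∀ ω, 0 ≤ μ ω) {E : Set Ω} {ω : Ω} (hω : ω ∈ E) :
    μ ω ≤ prob μ E := by
  classical
  calc μ ω = if ω ∈ E then μ ω else 0 := (if_pos hω).symm
    _ ≤ prob μ E := single_le_sum (f := fun ω => if ω ∈ E then μ ω else 0)
        (fun ω _ => by split_ifs <;> simp [hμ]) (mem_univ ω)

theorem prob_add_prob_compl (E : Set Ω) : prob μ E + prob μ Eᶜ = ∑ ω, μ ω := by
  classical
  simp only [prob, ← sum_add_distrib, Set.mem_compl_iff]
  exact sum_congr rfl fun ω _ => by split_ifs <;> simp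

theorem sum_mul_ite_mem (hμ1 : ∑ ω, μ ω = 1) (E : Set Ω) [DecidablePred (· ∈ E)] (u v : ℝ) :
    ∑ ω, μ ω * (if ω ∈ E then u else v) = prob μ E * u + (1 - prob μ E) * v := by
  classical
  rw [← hμ1, ← prob_add_prob_compl (μ := μ) E, add_sub_cancel_left]
  simp only [prob, sum_mul, ← sum_add_distrib, Set.mem_compl_iff]
  exact sum_congr rfl fun ω _ => by split_ifs <;> simp

theorem sum_mul_comp_eq_sum_prob_mul (c : Ω → γ) (t : Finset γ) (ht : ∀ ω, c ω ∈ t)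
    (G : γ → ℝ) : ∑ ω, μ ω * G (c ω) = ∑ g ∈ t, prob μ {ω | c ω = g} * G g := by
  classical
  simp only [prob, Set.mem_ofPred_eq, sum_mul, ite_mul, zero_mul]
  rw [sum_comm]
  exact sum_congr rfl fun ω _ => by simp [ht ω]

noncomputable def fiberProb (μ : Ω → ℝ) (c : Ω → γ) (ω : Ω) : ℝ :=
  prob μ {ω' | c ω' = c ω}

noncomputable def fiberCondProb (μ : Ω → ℝ) (X : Ω → α) (W : Ω → β) (ω : Ω) : ℝ :=
  fiberProb μ (fun ω => (X ω, W ω)) ω / fiberProb μ W ω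

theorem fiberProb_pos (hμ : ∀ ω, 0 ≤ μ ω) (c : Ω → γ) {ω : Ω} (hω : μ ω ≠ 0) :
    0 < fiberProb μ c ω :=
  ((hμ ω).lt_of_ne' hω).trans_le (single_le_prob hμ rfl)

theorem fiberCondProb_pos (hμ : ∀ ω, 0 ≤ μ ω) (X : Ω → α) (W : Ω → β) {ω : Ω}
    (hω : μ ω ≠ 0) : 0 < fiberCondProb μ X W ω :=
  div_pos (fiberProb_pos hμ _ hω) (fiberProb_pos hμ _ hω)

theorem condEntropy_eq_sum_mul_neg_logb_fiberCondProb (hμ : ∀ ω, 0 ≤ μ ω) (X : Ω → α)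
    (W : Ω → β) : condEntropy μ X W = ∑ ω, μ ω * -logb 2 (fiberCondProb μ X W ω) := by
  rw [condEntropy, entropy, entropy, neg_sub_neg, ← sum_sub_distrib]
  refine sum_congr rfl fun ω _ => ?_
  rcases eq_or_ne (μ ω) 0 with h | h
  · simp [h]
  rw [fiberCondProb, logb_div (fiberProb_pos hμ _ h).ne' (fiberProb_pos hμ _ h).ne']
  simp only [fiberProb]
  ring

theorem sum_mul_div_fiberCondProb_le_one (hμ : ∀ ω, 0 ≤ μ ω) (hμ1 : ∑ ω, μ ω = 1)
    [Fintype α] (X : Ω → α) (W : Ω → β) {q : α → β → ℝ} (hq0 : ∀ x w, 0 ≤ q x w)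
    (hq1 : ∀ w, ∑ x, q x w ≤ 1) :
    ∑ ω, μ ω * (q (X ω) (W ω) / fiberCondProb μ X W ω) ≤ 1 := by
  classical
  set T := univ.image W
  have hT : ∀ ω, W ω ∈ T := fun ω => mem_image_of_mem W (mem_univ ω)
  have hlaw := sum_mul_comp_eq_sum_prob_mul (μ := μ) (fun ω => (X ω, W ω)) (univ ×ˢ T)
    (fun ω => mem_product.mpr ⟨mem_univ _, hT ω⟩)
    (fun g => prob μ {ω | W ω = g.2} * q g.1 g.2 / prob μ {ω | (X ω, W ω) = g})
  have hW := sum_mul_comp_eq_sum_prob_mul (μ := μ) W T hT fun _ => 1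
  simp only [mul_one] at hW
  calc ∑ ω, μ ω * (q (X ω) (W ω) / fiberCondProb μ X W ω)
      = ∑ g ∈ univ ×ˢ T,
          prob μ {ω | (X ω, W ω) = g} * (prob μ {ω | W ω = g.2} * q g.1 g.2
            / prob μ {ω | (X ω, W ω) = g}) := by
        rw [← hlaw]
        refine sum_congr rfl fun ω _ => ?_
        rw [fiberCondProb, fiberProb, fiberProb, div_div_eq_mul_div, mul_comm (q _ _)]
    _ ≤ ∑ g ∈ univ ×ˢ T, prob μ {ω | W ω = g.2} * q g.1 g.2 := by
        refine sum_le_sum fun g _ => ?_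
        rcases eq_or_ne (prob μ {ω | (X ω, W ω) = g}) 0 with h | h
        · rw [h, zero_mul]
          exact mul_nonneg (prob_nonneg hμ _) (hq0 _ _)
        · rw [mul_div_cancel₀ _ h]
    _ = ∑ w ∈ T, prob μ {ω | W ω = w} * ∑ x, q x w := by
        rw [sum_product_right]
        simp only [mul_sum]
    _ ≤ ∑ w ∈ T, prob μ {ω | W ω = w} :=
        sum_le_sum fun w _ => mul_le_of_le_one_right (prob_nonneg hμ _) (hq1 w)
    _ = 1 := by rw [← hW, hμ1]

theorem condEntropy_le_sum_mul_neg_logb (hμ : ∀ ω, 0 ≤ μ ω) (hμ1 : ∑ ω, μ ω = 1)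
    [Fintype α] (X : Ω → α) (W : Ω → β) {q : α → β → ℝ} (hq0 : ∀ x w, 0 ≤ q x w)
    (hq1 : ∀ w, ∑ x, q x w ≤ 1) (hq : ∀ ω, μ ω ≠ 0 → 0 < q (X ω) (W ω)) :
    condEntropy μ X W ≤ ∑ ω, μ ω * -logb 2 (q (X ω) (W ω)) := by
  have hgibbs : ∑ ω, μ ω * logb 2 (q (X ω) (W ω) / fiberCondProb μ X W ω) ≤ 0 :=
    sum_mul_logb_nonpos one_lt_two _ (fun ω _ => hμ ω)
      (fun ω _ h => div_pos (hq ω h) (fiberCondProb_pos hμ X W h))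
      (by rw [hμ1]; exact sum_mul_div_fiberCondProb_le_one hμ hμ1 X W hq0 hq1)
  have hsplit : condEntropy μ X W = ∑ ω, μ ω * logb 2 (q (X ω) (W ω) / fiberCondProb μ X W ω)
      + ∑ ω, μ ω * -logb 2 (q (X ω) (W ω)) := by
    rw [condEntropy_eq_sum_mul_neg_logb_fiberCondProb hμ, ← sum_add_distrib]
    refine sum_congr rfl fun ω _ => ?_
    rcases eq_or_ne (μ ω) 0 with h | h
    · simp [h]
    rw [logb_div (hq ω h).ne' (fiberCondProb_pos hμ X W h).ne']
    ring
  linarith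

theorem condEntropy_eq_condEntropy_prod_of_markov (hμ : ∀ ω, 0 ≤ μ ω)
    {X : Ω → α} {Y : Ω → β} {Z : Ω → δ}
    (hM : ∀ x y z, prob μ {ω | X ω = x ∧ Y ω = y ∧ Z ω = z} * prob μ {ω | Y ω = y}
      = prob μ {ω | X ω = x ∧ Y ω = y} * prob μ {ω | Y ω = y ∧ Z ω = z}) :
    condEntropy μ X Y = condEntropy μ X (fun ω => (Y ω, Z ω)) := by
  simp only [condEntropy_eq_sum_mul_neg_logb_fiberCondProb hμ]
  refine sum_congr rfl fun ω _ => ?_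
  rcases eq_or_ne (μ ω) 0 with h | h
  · simp [h]
  have hfac : fiberProb μ (fun ω => (X ω, Y ω, Z ω)) ω * fiberProb μ Y ω
      = fiberProb μ (fun ω => (X ω, Y ω)) ω * fiberProb μ (fun ω => (Y ω, Z ω)) ω := by
    simpa only [fiberProb, Prod.mk.injEq] using hM (X ω) (Y ω) (Z ω)
  congr 3
  rw [fiberCondProb, fiberCondProb, div_eq_div_iff (fiberProb_pos hμ _ h).ne'
    (fiberProb_pos hμ _ h).ne']
  linarith

end FiniteProbability

section Fano

variable {𝒳 : Type*} [Fintype 𝒳] {𝒜 : 𝒳 → Finset 𝒳} {pe : ℝ}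

open Classical in
noncomputable def fanoKernel (𝒜 : 𝒳 → Finset 𝒳) (pe : ℝ) (x z : 𝒳) : ℝ :=
  if x ∈ 𝒜 z then (1 - pe) / (𝒜 z).card else pe / Fintype.card 𝒳

theorem fanoKernel_nonneg (hpe0 : 0 ≤ pe) (hpe1 : pe ≤ 1) (x z : 𝒳) : 0 ≤ fanoKernel 𝒜 pe x z := by
  unfold fanoKernel
  split_ifs
  · exact div_nonneg (sub_nonneg.mpr hpe1) (Nat.cast_nonneg _)
  · exact div_nonneg hpe0 (Nat.cast_nonneg _)

theorem fanoKernel_pos {x z : 𝒳} (hpe0 : x ∉ 𝒜 z → 0 < pe) (hpe1 : x ∈ 𝒜 z → pe < 1) :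
    0 < fanoKernel 𝒜 pe x z := by
  unfold fanoKernel
  split_ifs with h
  · exact div_pos (sub_pos.mpr (hpe1 h)) (Nat.cast_pos.mpr (card_pos.mpr ⟨x, h⟩))
  · exact div_pos (hpe0 h) (Nat.cast_pos.mpr (Fintype.card_pos_iff.mpr ⟨x⟩))

theorem sum_fanoKernel_le_one (hpe0 : 0 ≤ pe) (hpe1 : pe ≤ 1) (z : 𝒳) :
    ∑ x, fanoKernel 𝒜 pe x z ≤ 1 := by
  classical
  have hcancel : ∀ (n : ℕ) {a : ℝ}, 0 ≤ a → n * (a / n) ≤ a := fun n a ha => by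
    rcases eq_or_ne (n : ℝ) 0 with h | h
    · simpa [h] using ha
    · rw [mul_div_cancel₀ _ h]
  have hcard : ((univ.filter fun x => x ∉ 𝒜 z).card : ℝ) ≤ Fintype.card 𝒳 := by
    exact_mod_cast card_filter_le _ _
  calc ∑ x, fanoKernel 𝒜 pe x z
      = (𝒜 z).card * ((1 - pe) / (𝒜 z).card)
          + (univ.filter fun x => x ∉ 𝒜 z).card * (pe / Fintype.card 𝒳) := by
        simp only [fanoKernel, sum_ite, sum_const, nsmul_eq_mul]
        rw [filter_mem_eq_inter, univ_inter]
    _ ≤ (1 - pe) + Fintype.card 𝒳 * (pe / Fintype.card 𝒳) := by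
        gcongr
        exact hcancel _ (sub_nonneg.mpr hpe1)
    _ ≤ (1 - pe) + pe := by gcongr; exact hcancel _ hpe0
    _ = 1 := by ring

theorem neg_logb_fanoKernel_le [DecidableEq 𝒳] {x z : 𝒳} (hpe0 : x ∉ 𝒜 z → pe ≠ 0)
    (hpe1 : x ∈ 𝒜 z → pe ≠ 1) :
    -logb 2 (fanoKernel 𝒜 pe x z) ≤ if x ∉ 𝒜 z then logb 2 (Fintype.card 𝒳) - logb 2 pe
      else (⨆ x, logb 2 (𝒜 x).card) - logb 2 (1 - pe) := by
  unfold fanoKernel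
  by_cases h : x ∈ 𝒜 z
  · rw [if_pos h, if_neg (not_not_intro h), logb_div (sub_ne_zero.mpr (hpe1 h).symm)
      (Nat.cast_ne_zero.mpr (card_pos.mpr ⟨x, h⟩).ne')]
    have : logb 2 (𝒜 z).card ≤ ⨆ x, logb 2 (𝒜 x).card :=
      le_ciSup (f := fun x => logb 2 (𝒜 x).card) (Set.finite_range _).bddAbove z
    linarith
  · rw [if_neg h, if_pos h,
      logb_div (hpe0 h) (Nat.cast_ne_zero.mpr (Fintype.card_pos_iff.mpr ⟨x⟩).ne'), neg_sub]

end Fano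

theorem condEntropy_prod_le_fano {Ω 𝒳 β : Type*} [Fintype Ω] [Fintype 𝒳] {μ : Ω → ℝ}
    (hμ : ∀ ω, 0 ≤ μ ω) (hμ1 : ∑ ω, μ ω = 1) (X : Ω → 𝒳) (Y : Ω → β) (Xt : Ω → 𝒳)
    (𝒜 : 𝒳 → Finset 𝒳) {pe : ℝ} (hpe : pe = prob μ {ω | X ω ∉ 𝒜 (Xt ω)}) :
    condEntropy μ X (fun ω => (Y ω, Xt ω)) ≤
      pe * logb 2 (Fintype.card 𝒳)
        + (1 - pe) * (⨆ x : 𝒳, logb 2 ((𝒜 x).card)) + binEnt pe := by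
  classical
  set E := {ω | X ω ∉ 𝒜 (Xt ω)}
  have hcompl := prob_add_prob_compl (μ := μ) E
  rw [hμ1, ← hpe] at hcompl
  have hpe0 : 0 ≤ pe := hpe ▸ prob_nonneg hμ E
  have hpe1 : pe ≤ 1 := by linarith [prob_nonneg hμ Eᶜ]
  have hbad : ∀ ω, μ ω ≠ 0 → X ω ∉ 𝒜 (Xt ω) → 0 < pe := fun ω h hω =>
    ((hμ ω).lt_of_ne' h).trans_le (hpe ▸ single_le_prob hμ hω)
  have hgood : ∀ ω, μ ω ≠ 0 → X ω ∈ 𝒜 (Xt ω) → pe < 1 := fun ω h hω => by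
    have := single_le_prob hμ (E := Eᶜ) (not_not_intro hω)
    linarith [(hμ ω).lt_of_ne' h]
  calc condEntropy μ X (fun ω => (Y ω, Xt ω))
      ≤ ∑ ω, μ ω * -logb 2 (fanoKernel 𝒜 pe (X ω) (Xt ω)) :=
        condEntropy_le_sum_mul_neg_logb (q := fun x (w : β × 𝒳) => fanoKernel 𝒜 pe x w.2) hμ hμ1
          X (fun ω => (Y ω, Xt ω)) (fun _ _ => fanoKernel_nonneg hpe0 hpe1 _ _)
          (fun _ => sum_fanoKernel_le_one hpe0 hpe1 _)
          (fun ω h => fanoKernel_pos (hbad ω h) (hgood ω h))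
    _ ≤ ∑ ω, μ ω * (if ω ∈ E then logb 2 (Fintype.card 𝒳) - logb 2 pe
          else (⨆ x, logb 2 (𝒜 x).card) - logb 2 (1 - pe)) := by
        refine sum_le_sum fun ω _ => ?_
        rcases eq_or_ne (μ ω) 0 with h | h
        · simp [h]
        exact mul_le_mul_of_nonneg_left (neg_logb_fanoKernel_le (fun hω => (hbad ω h hω).ne')
          (fun hω => (hgood ω h hω).ne)) (hμ ω)
    _ = pe * logb 2 (Fintype.card 𝒳) + (1 - pe) * (⨆ x : 𝒳, logb 2 ((𝒜 x).card))
          + binEnt pe := by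
        rw [sum_mul_ite_mem hμ1, ← hpe, binEnt]
        ring

theorem generalized_fano_general
    {Ω 𝒳 β : Type*} [Fintype Ω] [Fintype 𝒳]
    (μ : Ω → ℝ) (hμ0 : ∀ ω, 0 ≤ μ ω) (hμ1 : ∑ ω, μ ω = 1)
    (X : Ω → 𝒳) (Y : Ω → β) (Xt : Ω → 𝒳)
    (hMarkov : ∀ (x : 𝒳) (y : β) (z : 𝒳),
      prob μ {ω | X ω = x ∧ Y ω = y ∧ Xt ω = z} * prob μ {ω | Y ω = y}
        = prob μ {ω | X ω = x ∧ Y ω = y} * prob μ {ω | Y ω = y ∧ Xt ω = z})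
    (𝒜 : 𝒳 → Finset 𝒳)
    (hsym : ∀ x x', x' ∈ 𝒜 x ↔ x ∈ 𝒜 x')
    (pe : ℝ) (hpe : pe = prob μ {ω | Xt ω ∉ 𝒜 (X ω)}) :
    condEntropy μ X Y ≤
      pe * Real.logb 2 (Fintype.card 𝒳)
        + (1 - pe) * (⨆ x : 𝒳, Real.logb 2 ((𝒜 x).card)) + binEnt pe := by
  have hevent : {ω | Xt ω ∉ 𝒜 (X ω)} = {ω | X ω ∉ 𝒜 (Xt ω)} := by
    ext ω
    simp only [Set.mem_ofPred_eq, hsym (X ω)]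
  rw [condEntropy_eq_condEntropy_prod_of_markov hμ0 hMarkov]
  exact condEntropy_prod_le_fano hμ0 hμ1 X Y Xt 𝒜 (hpe.trans (congrArg _ hevent))

/-- **Generalized Fano inequality.**  Let `X → Y → X̃` be a Markov chain with `X, X̃`
taking values in a finite set `𝒳`, and let `𝒜 x ⊆ 𝒳` be symmetric approximation
sets with `x ∈ 𝒜 x`.  With `p_e = Pr[X̃ ∉ 𝒜 X]`,
`p_e·log|𝒳| + (1−p_e)·sup_x log|𝒜 x| + H(p_e) ≥ H(X|Y)`. -/
theorem generalized_fano
    {Ω 𝒳 β : Type*} [Fintype Ω] [Fintype 𝒳] [Nonempty 𝒳]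
    (μ : Ω → ℝ) (hμ0 : ∀ ω, 0 ≤ μ ω) (hμ1 : ∑ ω, μ ω = 1)
    (X : Ω → 𝒳) (Y : Ω → β) (Xt : Ω → 𝒳)
    (hMarkov : ∀ (x : 𝒳) (y : β) (z : 𝒳),
      prob μ {ω | X ω = x ∧ Y ω = y ∧ Xt ω = z} * prob μ {ω | Y ω = y}
        = prob μ {ω | X ω = x ∧ Y ω = y} * prob μ {ω | Y ω = y ∧ Xt ω = z})
    (𝒜 : 𝒳 → Finset 𝒳) (hmem : ∀ x, x ∈ 𝒜 x)
    (hsym : ∀ x x', x' ∈ 𝒜 x ↔ x ∈ 𝒜 x')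
    (pe : ℝ) (hpe : pe = prob μ {ω | Xt ω ∉ 𝒜 (X ω)}) :
    condEntropy μ X Y ≤
      pe * Real.logb 2 (Fintype.card 𝒳)
        + (1 - pe) * (⨆ x : 𝒳, Real.logb 2 ((𝒜 x).card)) + binEnt pe :=
  generalized_fano_general μ hμ0 hμ1 X Y Xt hMarkov 𝒜 hsym pe hpe
end

section
/- Let G be a graph with vertex set [n] whose edges are chosen by sampling r edges uniformly at random without repetition from all (n choose 2) pairs, with r ≤ n/2. Then for any fixed integer k ≥ 3, the probability that k fixed sampled edges (in a fixed order among the r samples) form a closed walk is at most 2.01^k / n^k, and the probability that they form a walk between two fixed distinct endpoints is at most 2.01^k / n^{k+1}. -/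
/-!
Permutations of the edge set act transitively on injections `Fin k ↪ E` and commute with
restriction along `t`, so restricting a uniformly random injection `Fin r ↪ E` to the positions
`t` gives a uniformly random injection `Fin k ↪ E`. With `N = n.choose 2`, the probability is thus
at most the number of walks of `k` non-loop edges divided by `N (N - 1) ⋯ (N - k + 1)`.
A closed walk is determined by its first `k` vertices, consecutive ones distinct, so there are at
most `n (n - 1)^(k - 1)` of them; a walk with fixed ends is determined by its `k - 1` inner
vertices, hence at most `(n - 1)^(k - 1)`. Finally the falling factorial is at least
`N (N - k + 1)^(k - 1)`, and `n² ≤ 2.01 N`, `n (n - 1) ≤ 2.01 (N - k + 1)` as soon as `n ≥ 202`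
and `2k ≤ n`.
-/

open Finset

abbrev SimpleEdge (n : ℕ) := {e : Sym2 (Fin n) // ¬ e.IsDiag}

def IsClosedWalk {n k : ℕ} (es : Fin k → Sym2 (Fin n)) : Prop :=
  ∃ v : Fin (k + 1) → Fin n, v 0 = v (Fin.last k) ∧
    ∀ j : Fin k, es j = s(v j.castSucc, v j.succ)

def IsWalkBetween {n k : ℕ} (u w : Fin n) (es : Fin k → Sym2 (Fin n)) : Prop :=
  ∃ v : Fin (k + 1) → Fin n, v 0 = u ∧ v (Fin.last k) = w ∧
    ∀ j : Fin k, es j = s(v j.castSucc, v j.succ)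

namespace Function.Embedding

variable {ι κ E : Type*}

theorem card_fiber_trans_eq [Finite ι] (t : ι ↪ κ) (e e' : ι ↪ E) :
    Nat.card {f : κ ↪ E // t.trans f = e} = Nat.card {f : κ ↪ E // t.trans f = e'} := by
  obtain ⟨σ, rfl⟩ := Equiv.Perm.exists_smul_eq_embedding e e'
  refine Nat.card_congr ((MulAction.toPerm σ : Equiv.Perm (κ ↪ E)).subtypeEquiv fun f => ?_)
  rw [← smul_left_cancel_iff σ]
  rfl

theorem card_subtype_trans_mul [Finite ι] [Finite E] (t : ι ↪ κ) (Q : (ι ↪ E) → Prop) :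
    Nat.card {f : κ ↪ E // Q (t.trans f)} * Nat.card (ι ↪ E) =
      Nat.card {e : ι ↪ E // Q e} * Nat.card (κ ↪ E) := by
  classical
  cases nonempty_fintype (ι ↪ E)
  set c : (ι ↪ E) → ℕ := fun e => Nat.card {f : κ ↪ E // t.trans f = e}
  have hQ : Nat.card {f : κ ↪ E // Q (t.trans f)} = ∑ e : {e // Q e}, c e := by
    rw [← Nat.card_sigma, Nat.card_congr (Equiv.sigmaSubtypeFiberEquivSubtype t.trans
      fun _ => Iff.rfl)]
  have hT : Nat.card (κ ↪ E) = ∑ e, c e := by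
    rw [← Nat.card_sigma, Nat.card_congr (Equiv.sigmaFiberEquiv t.trans)]
  have hconst (e : ι ↪ E) : ∑ e', c e' = Nat.card (ι ↪ E) * c e := by
    rw [sum_congr rfl fun e' _ => card_fiber_trans_eq t e' e, sum_const, card_univ, smul_eq_mul,
      ← Nat.card_eq_fintype_card]
  rw [hQ, hT, sum_mul, sum_congr rfl fun e _ => (mul_comm _ _).trans (hconst e.1).symm,
    sum_const, card_univ, smul_eq_mul, ← Nat.card_eq_fintype_card]

theorem card_subtype_trans_div_card {K : Type*} [Semifield K] [CharZero K] [Finite ι]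
    [Finite E] [Nonempty (κ ↪ E)] (t : ι ↪ κ) (Q : (ι ↪ E) → Prop) :
    (Nat.card {f : κ ↪ E // Q (t.trans f)} : K) / Nat.card (κ ↪ E) =
      Nat.card {e : ι ↪ E // Q e} / Nat.card (ι ↪ E) := by
  have : Nonempty (ι ↪ E) := ⟨t.trans (Classical.arbitrary _)⟩
  rw [div_eq_div_iff (Nat.cast_ne_zero.2 Nat.card_pos.ne') (Nat.cast_ne_zero.2 Nat.card_pos.ne')]
  exact_mod_cast card_subtype_trans_mul t Q

end Function.Embedding

section SubtypeEmbedding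

variable {ι κ β : Type*} [Finite ι] [Finite β] {p : β → Prop}

theorem card_embedding_subtype_le_ncard (P : (ι → β) → Prop) :
    Nat.card {e : ι ↪ Subtype p // P fun i => (e i).1} ≤
      {es : ι → β | P es ∧ ∀ i, p (es i)}.ncard := by
  rw [← Nat.card_coe_set_eq]
  refine Nat.card_le_card_of_injective (fun e => ⟨fun i => (e.1 i).1, e.2, fun i => (e.1 i).2⟩)
    fun e e' h => Subtype.ext <| Function.Embedding.ext fun i =>
      Subtype.ext (congrFun (congrArg Subtype.val h) i)

theorem card_embedding_subtype_trans_div_card_le [Nonempty (κ ↪ Subtype p)] (t : ι ↪ κ)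
    (P : (ι → β) → Prop) :
    (Nat.card {f : κ ↪ Subtype p // P fun i => (f (t i)).1} : ℝ) / Nat.card (κ ↪ Subtype p) ≤
      {es : ι → β | P es ∧ ∀ i, p (es i)}.ncard / Nat.card (ι ↪ Subtype p) := by
  refine (Function.Embedding.card_subtype_trans_div_card t
    (fun e : ι ↪ Subtype p => P fun i => (e i).1)).trans_le ?_
  gcongr
  exact card_embedding_subtype_le_ncard P

end SubtypeEmbedding

theorem card_chain_from {α : Type*} [Finite α] (u : α) : ∀ m : ℕ,
    Nat.card {v : Fin (m + 1) → α // v 0 = u ∧ ∀ i : Fin m, v i.castSucc ≠ v i.succ} =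
      (Nat.card α - 1) ^ m
  | 0 => by
    rw [pow_zero, Nat.card_eq_one_iff_unique]
    refine ⟨⟨fun v w => Subtype.ext (funext fun i => ?_)⟩, ⟨⟨fun _ => u, rfl, Fin.elim0⟩⟩⟩
    rw [Fin.fin_one_eq_zero i, v.2.1, w.2.1]
  | m + 1 => by
    classical
    cases nonempty_fintype α
    let extend : {v : Fin (m + 2) → α // v 0 = u ∧ ∀ i : Fin (m + 1), v i.castSucc ≠ v i.succ} ≃
        Σ w : {w : Fin (m + 1) → α // w 0 = u ∧ ∀ i : Fin m, w i.castSucc ≠ w i.succ},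
          {a : α // a ≠ w.1 (Fin.last m)} :=
      { toFun := fun v => ⟨⟨Fin.init v.1, v.2.1, fun i => v.2.2 i.castSucc⟩,
          ⟨v.1 (Fin.last _), (v.2.2 (Fin.last m)).symm⟩⟩
        invFun := fun p => ⟨Fin.snoc p.1.1 p.2.1,
          (Fin.snoc_castSucc (α := fun _ => α) _ _ 0).trans p.1.2.1,
          Fin.lastCases (by rw [Fin.succ_last, Fin.snoc_last, Fin.snoc_castSucc]; exact p.2.2.symm)
            fun i => by
              rw [Fin.succ_castSucc, Fin.snoc_castSucc, Fin.snoc_castSucc]; exact p.1.2.2 i⟩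
        left_inv := fun v => Subtype.ext (Fin.snoc_init_self v.1)
        right_inv := fun p => Sigma.subtype_ext (Subtype.ext (Fin.init_snoc (α := fun _ => α) _ _))
          (Fin.snoc_last (α := fun _ => α) _ _) }
    rw [Nat.card_congr extend, Nat.card_sigma]
    simp_rw [Nat.card_eq_fintype_card, Fintype.card_subtype_compl, Fintype.card_unique]
    rw [sum_const, card_univ, ← Nat.card_eq_fintype_card, card_chain_from u m, smul_eq_mul,
      pow_succ, Nat.card_eq_fintype_card]

section

variable {n : ℕ}

theorem ncard_walkBetween_le (u w : Fin n) (m : ℕ) :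
    {es : Fin (m + 1) → Sym2 (Fin n) | IsWalkBetween u w es ∧ ∀ j, ¬ (es j).IsDiag}.ncard ≤
      (n - 1) ^ m := by
  let edges (x : Fin (m + 1) → Fin n) : Fin (m + 1) → Sym2 (Fin n) := fun j =>
    s(Fin.snoc (α := fun _ => Fin n) x w j.castSucc, Fin.snoc (α := fun _ => Fin n) x w j.succ)
  have hsub : {es : Fin (m + 1) → Sym2 (Fin n) | IsWalkBetween u w es ∧ ∀ j, ¬ (es j).IsDiag} ⊆
      edges '' {x | x 0 = u ∧ ∀ i : Fin m, x i.castSucc ≠ x i.succ} := by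
    rintro es ⟨⟨v, hv0, hvw, hes⟩, hdiag⟩
    refine ⟨Fin.init v, ⟨hv0, fun i => ?_⟩, ?_⟩
    · have := hdiag i.castSucc
      rwa [hes, Sym2.mk_isDiag_iff, Fin.succ_castSucc] at this
    · funext j
      simp only [edges, ← hvw, Fin.snoc_init_self, hes]
  calc _ ≤ _ := Set.ncard_le_ncard hsub (Set.toFinite _)
    _ ≤ _ := Set.ncard_image_le (Set.toFinite _)
    _ = (n - 1) ^ m := by
      rw [← Nat.card_coe_set_eq]
      exact (card_chain_from u m).trans (by rw [Nat.card_eq_fintype_card, Fintype.card_fin])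

theorem ncard_closedWalk_le (m : ℕ) :
    {es : Fin (m + 1) → Sym2 (Fin n) | IsClosedWalk es ∧ ∀ j, ¬ (es j).IsDiag}.ncard ≤
      n * (n - 1) ^ m := by
  have hsub : {es : Fin (m + 1) → Sym2 (Fin n) | IsClosedWalk es ∧ ∀ j, ¬ (es j).IsDiag} ⊆
      ⋃ u, {es | IsWalkBetween u u es ∧ ∀ j, ¬ (es j).IsDiag} := by
    rintro es ⟨⟨v, hv, hes⟩, hdiag⟩
    exact Set.mem_iUnion.2 ⟨v 0, ⟨v, rfl, hv.symm, hes⟩, hdiag⟩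
  calc _ ≤ _ := Set.ncard_le_ncard hsub (Set.toFinite _)
    _ ≤ _ := Set.ncard_iUnion_le_of_fintype _
    _ ≤ ∑ _u : Fin n, (n - 1) ^ m := sum_le_sum fun u _ => ncard_walkBetween_le u u m
    _ = n * (n - 1) ^ m := by simp

theorem pow_mul_le_descFactorial_choose_two {m : ℕ} (hn : 202 ≤ n) (hm : 2 * (m + 1) ≤ n) :
    (n : ℝ) ^ (m + 2) * (n - 1) ^ m ≤ 2.01 ^ (m + 1) * (n.choose 2).descFactorial (m + 1) := by
  set N := n.choose 2
  have hNR : (N : ℝ) = n * (n - 1) / 2 := Nat.cast_choose_two ℝ n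
  have hnR : (202 : ℝ) ≤ n := by exact_mod_cast hn
  have hmR : 2 * ((m : ℝ) + 1) ≤ n := by exact_mod_cast hm
  have hmN : m + 1 ≤ N := by
    rw [← Nat.cast_le (α := ℝ), hNR]
    push_cast
    nlinarith
  obtain ⟨M, hM⟩ : ∃ M, N = M + 1 := ⟨N - 1, by omega⟩
  have hdesc : (N : ℝ) * (N - m) ^ m ≤ N.descFactorial (m + 1) := by
    have h := Nat.mul_le_mul_left (M + 1) (Nat.pow_sub_le_descFactorial M m)
    rw [← Nat.succ_descFactorial_succ, ← hM] at h
    rw [← Nat.cast_sub (by omega)]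
    exact_mod_cast h
  have hfirst : (n : ℝ) ^ 2 ≤ 2.01 * N := by rw [hNR]; nlinarith
  have hrest : (n : ℝ) * (n - 1) ≤ 2.01 * (N - m) := by rw [hNR]; nlinarith
  have hpos : (0 : ℝ) ≤ n * (n - 1) := by nlinarith
  calc (n : ℝ) ^ (m + 2) * (n - 1) ^ m = n ^ 2 * (n * (n - 1)) ^ m := by rw [mul_pow]; ring
    _ ≤ (2.01 * N) * (2.01 * (N - m)) ^ m :=
      mul_le_mul hfirst (pow_le_pow_left₀ hpos hrest m) (by positivity) (by positivity)
    _ = 2.01 ^ (m + 1) * (N * (N - m) ^ m) := by rw [mul_pow]; ring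
    _ ≤ 2.01 ^ (m + 1) * N.descFactorial (m + 1) := by gcongr

theorem card_embedding_simpleEdge (k : ℕ) :
    Nat.card (Fin k ↪ SimpleEdge n) = (n.choose 2).descFactorial k := by
  rw [Nat.card_eq_fintype_card, Fintype.card_embedding_eq, Sym2.card_subtype_not_diag,
    Fintype.card_fin, Fintype.card_fin]

end

theorem random_edges_walk_prob_general (n r k : ℕ) (hn : 202 ≤ n) (hr : 2 * r ≤ n)
    (hk : 3 ≤ k) (t : Fin k ↪ Fin r) :
    ((Nat.card {f : Fin r ↪ SimpleEdge n //
          IsClosedWalk (fun j => (f (t j)).1)} : ℝ)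
        / (Nat.card (Fin r ↪ SimpleEdge n) : ℝ)
      ≤ 2.01 ^ k / (n : ℝ) ^ k)
    ∧ ∀ u w : Fin n, u ≠ w →
      ((Nat.card {f : Fin r ↪ SimpleEdge n //
            IsWalkBetween u w (fun j => (f (t j)).1)} : ℝ)
          / (Nat.card (Fin r ↪ SimpleEdge n) : ℝ)
        ≤ 2.01 ^ k / (n : ℝ) ^ (k + 1)) := by
  obtain ⟨m, rfl⟩ : ∃ m, k = m + 1 := ⟨k - 1, by omega⟩
  have hkr : m + 1 ≤ r := by simpa using Fintype.card_le_of_embedding t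
  have hrN : r ≤ n.choose 2 := by
    rw [Nat.choose_two_right, Nat.le_div_iff_mul_le two_pos]
    nlinarith [Nat.mul_le_mul_left n (show 1 ≤ n - 1 by omega)]
  have : Nonempty (Fin r ↪ SimpleEdge n) := Function.Embedding.nonempty_of_card_le <| by
    rwa [Sym2.card_subtype_not_diag, Fintype.card_fin, Fintype.card_fin]
  have hD : (0 : ℝ) < (n.choose 2).descFactorial (m + 1) :=
    Nat.cast_pos.2 (Nat.descFactorial_pos.2 (by omega))
  have bound (P : (Fin (m + 1) → Sym2 (Fin n)) → Prop) (c j : ℕ)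
      (hP : {es | P es ∧ ∀ i, ¬ (es i).IsDiag}.ncard ≤ c)
      (hc : (c : ℝ) * n ^ j = n ^ (m + 2) * (n - 1) ^ m) :
      (Nat.card {f : Fin r ↪ SimpleEdge n // P fun i => (f (t i)).1} : ℝ) /
        Nat.card (Fin r ↪ SimpleEdge n) ≤ 2.01 ^ (m + 1) / n ^ j := by
    calc _ ≤ _ := card_embedding_subtype_trans_div_card_le t P
      _ ≤ (c : ℝ) / (n.choose 2).descFactorial (m + 1) := by
        rw [card_embedding_simpleEdge]
        gcongr
      _ ≤ _ := by
        rw [div_le_div_iff₀ hD (by positivity), hc]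
        exact pow_mul_le_descFactorial_choose_two hn (by omega)
  have hn1 : ((n - 1 : ℕ) : ℝ) = n - 1 := Nat.cast_pred (by omega)
  refine ⟨bound _ _ _ (ncard_closedWalk_le m) ?_,
    fun u w _ => bound _ _ _ (ncard_walkBetween_le u w m) ?_⟩ <;>
  · push_cast [hn1]
    ring

theorem random_edges_walk_prob (n r k : ℕ) (hn : 202 ≤ n) (hr : 2 * r ≤ n)
    (hk : 3 ≤ k) (hkr : k ≤ r) (t : Fin k ↪ Fin r) :
    ((Nat.card {f : Fin r ↪ SimpleEdge n //
          IsClosedWalk (fun j => (f (t j)).1)} : ℝ)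
        / (Nat.card (Fin r ↪ SimpleEdge n) : ℝ)
      ≤ 2.01 ^ k / (n : ℝ) ^ k)
    ∧ ∀ u w : Fin n, u ≠ w →
      ((Nat.card {f : Fin r ↪ SimpleEdge n //
            IsWalkBetween u w (fun j => (f (t j)).1)} : ℝ)
          / (Nat.card (Fin r ↪ SimpleEdge n) : ℝ)
        ≤ 2.01 ^ k / (n : ℝ) ^ (k + 1)) :=
  random_edges_walk_prob_general n r k hn hr hk t
end

section
/- Fix ε ∈ (ω(√(log n / n)), 0.001), q = 10^{−8}·n/ε², and ρ = 100ε. Let (P, G) be sampled with P ∈ {0,1}ⁿ uniform and edges independent with probabilities 1/2 ± ρ according to whether endpoints agree under P. Let σ_q = ((v_{i₁}, v_{j₁}, a₁),…,(v_{i_q}, v_{j_q}, a_q)) be an adaptive query transcript where each queried pair (v_{iₜ}, v_{jₜ}) is a deterministic function of the earlier transcript, and aₜ is the indicator of (v_{iₜ}, v_{jₜ}) ∈ E. Then the mutual information satisfies I(P; σ_q) < 0.0025·n. -/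
open Finset

noncomputable def mutInfo {Ω α β : Type*} [Fintype Ω] (μ : Ω → ℝ)
    (X : Ω → α) (Y : Ω → β) : ℝ :=
  entropy μ X + entropy μ Y - entropy μ (fun ω => (X ω, Y ω))

abbrev PairIdx (n : ℕ) := {p : Fin n × Fin n // p.1 < p.2}

open Classical in
noncomputable def plantedDensity (n : ℕ) (ρ : ℝ) (P : Fin n → Bool)
    (g : PairIdx n → Bool) : ℝ :=
  ((2 : ℝ) ^ n)⁻¹ * ∏ p : PairIdx n,
    (if ((g p = true) ↔ (P p.val.1 = P p.val.2)) then 1/2 + ρ else 1/2 - ρ)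

def edgeOf {n : ℕ} (g : PairIdx n → Bool) (u v : Fin n) : Bool :=
  if h : u < v then g ⟨(u, v), h⟩ else if h' : v < u then g ⟨(v, u), h'⟩ else false

def transcript {n : ℕ} (Q : List Bool → Fin n × Fin n) (g : PairIdx n → Bool) :
    ℕ → List ((Fin n × Fin n) × Bool)
  | 0 => []
  | t + 1 =>
    let σ := transcript Q g t
    let uv := Q (σ.map Prod.snd)
    σ ++ [(uv, edgeOf g uv.1 uv.2)]

namespace PP

variable {n : ℕ}

open Classical in
noncomputable def wgt (ρ : ℝ) (x : Fin n → Bool) (p : PairIdx n) (b : Bool) : ℝ :=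
  if ((b = true) ↔ (x p.val.1 = x p.val.2)) then 1/2 + ρ else 1/2 - ρ

noncomputable def nu (ρ : ℝ) (x : Fin n → Bool) (g : PairIdx n → Bool) : ℝ :=
  ∏ p, wgt ρ x p (g p)

noncomputable def cp (ρ : ℝ) (x : Fin n → Bool) (A : Set (PairIdx n → Bool)) : ℝ :=
  ∑ g, A.indicator (nu ρ x) g

variable {ρ : ℝ} (h0 : 0 < ρ) (h1 : ρ < 1/4)

include h0 h1 in
lemma wgt_pos (x : Fin n → Bool) (p : PairIdx n) (b : Bool) : 0 < wgt ρ x p b := by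
  unfold wgt; split <;> linarith

lemma wgt_cases (x : Fin n → Bool) (p : PairIdx n) (b : Bool) :
    wgt ρ x p b = 1/2 + ρ ∨ wgt ρ x p b = 1/2 - ρ := by
  unfold wgt; split <;> simp

lemma wgt_total (x : Fin n → Bool) (p : PairIdx n) :
    wgt ρ x p true + wgt ρ x p false = 1 := by
  unfold wgt
  by_cases h : x p.val.1 = x p.val.2 <;> simp [h] <;> ring

lemma wgt_false (x : Fin n → Bool) (p : PairIdx n) :
    wgt ρ x p false = 1 - wgt ρ x p true := by
  have := wgt_total (ρ := ρ) x p; linarith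

include h0 h1 in
lemma nu_pos (x : Fin n → Bool) (g : PairIdx n → Bool) : 0 < nu ρ x g :=
  Finset.prod_pos fun p _ => wgt_pos h0 h1 x p (g p)

lemma sum_nu (x : Fin n → Bool) : ∑ g : PairIdx n → Bool, nu ρ x g = 1 := by
  classical
  unfold nu
  rw [← Fintype.prod_sum (fun p (b : Bool) => wgt ρ x p b)]
  simp only [Fintype.sum_bool]
  rw [Finset.prod_congr rfl fun p _ => wgt_total (ρ := ρ) x p]
  simp

set_option maxHeartbeats 1000000 in
lemma planted_eq (x : Fin n → Bool) (g : PairIdx n → Bool) :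
    plantedDensity n ρ x g = ((2:ℝ)^n)⁻¹ * nu ρ x g := by
  rfl

set_option maxHeartbeats 2000000 in
open Classical in
lemma cp_cyl (x : Fin n → Bool) (S : Finset (PairIdx n)) (g0 : PairIdx n → Bool) :
    cp ρ x {g' | ∀ p ∈ S, g' p = g0 p} = ∏ p ∈ S, wgt ρ x p (g0 p) := by
  classical
  unfold cp nu
  have key : ∀ g : PairIdx n → Bool,
      Set.indicator {g' | ∀ p ∈ S, g' p = g0 p} (fun g => ∏ p, wgt ρ x p (g p)) g
      = ∏ p, (if p ∈ S then (if g p = g0 p then wgt ρ x p (g p) else 0)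
              else wgt ρ x p (g p)) := by
    intro g
    by_cases h : ∀ p ∈ S, g p = g0 p
    · rw [Set.indicator_of_mem (show g ∈ {g' | ∀ p ∈ S, g' p = g0 p} from h)]
      exact Finset.prod_congr rfl fun p _ => by
        by_cases hp : p ∈ S <;> simp [hp, h p, h]
    · rw [Set.indicator_of_notMem (show g ∉ {g' | ∀ p ∈ S, g' p = g0 p} from h)]
      push_neg at h
      obtain ⟨p, hpS, hpne⟩ := h
      exact (Finset.prod_eq_zero (Finset.mem_univ p) (by simp [hpS, hpne])).symm
  simp only [key]
  rw [← Fintype.prod_sum (fun p (b : Bool) =>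
    if p ∈ S then (if b = g0 p then wgt ρ x p b else 0) else wgt ρ x p b)]
  have : ∀ p : PairIdx n,
      (∑ b : Bool, (if p ∈ S then (if b = g0 p then wgt ρ x p b else 0) else wgt ρ x p b))
      = if p ∈ S then wgt ρ x p (g0 p) else 1 := by
    intro p
    by_cases hp : p ∈ S
    · simp only [hp, if_true, Fintype.sum_bool]
      cases hb : g0 p <;> simp
    · simp only [hp, if_false, Fintype.sum_bool]
      exact wgt_total x p
  simp only [this]
  rw [Finset.prod_ite_mem]
  simp



section Transcript

variable {n : ℕ} (Q : List Bool → Fin n × Fin n)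

/-- The list of answer bits after `t` queries. -/
def ansl (g : PairIdx n → Bool) (t : ℕ) : List Bool :=
  (transcript Q g t).map Prod.snd

lemma transcript_succ (g : PairIdx n → Bool) (t : ℕ) :
    transcript Q g (t+1) = transcript Q g t ++
      [(Q (ansl Q g t), edgeOf g (Q (ansl Q g t)).1 (Q (ansl Q g t)).2)] := rfl

lemma ansl_zero (g : PairIdx n → Bool) : ansl Q g 0 = [] := rfl

lemma ansl_succ (g : PairIdx n → Bool) (t : ℕ) :
    ansl Q g (t+1) = ansl Q g t ++
      [edgeOf g (Q (ansl Q g t)).1 (Q (ansl Q g t)).2] := by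
  unfold ansl
  rw [transcript_succ]
  simp
  rfl

lemma ansl_length (g : PairIdx n → Bool) (t : ℕ) : (ansl Q g t).length = t := by
  induction t with
  | zero => rfl
  | succ t ih => rw [ansl_succ]; simp [ih]

lemma ansl_succ_inj (g g' : PairIdx n → Bool) (t : ℕ) :
    ansl Q g' (t+1) = ansl Q g (t+1) ↔
      (ansl Q g' t = ansl Q g t ∧
        edgeOf g' (Q (ansl Q g t)).1 (Q (ansl Q g t)).2
          = edgeOf g (Q (ansl Q g t)).1 (Q (ansl Q g t)).2) := by
  constructor
  · intro h
    rw [ansl_succ, ansl_succ] at h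
    obtain ⟨h1, h2⟩ := List.append_inj' h (by simp)
    refine ⟨h1, ?_⟩
    rw [h1] at h2
    simpa using h2
  · rintro ⟨h1, h2⟩
    rw [ansl_succ, ansl_succ, h1, h2]

lemma transcript_eq_iff (g g' : PairIdx n → Bool) (t : ℕ) :
    transcript Q g' t = transcript Q g t ↔ ansl Q g' t = ansl Q g t := by
  induction t with
  | zero => simp [transcript, ansl_zero]
  | succ t ih =>
    constructor
    · intro h
      exact congrArg (List.map Prod.snd) h
    · intro h
      rw [ansl_succ_inj] at h
      obtain ⟨h1, h2⟩ := h
      rw [transcript_succ, transcript_succ, ih.mpr h1, h1, h2]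

/-- The unordered pair queried, if nondegenerate. -/
def pairOf (uv : Fin n × Fin n) : Option (PairIdx n) :=
  if h : uv.1 < uv.2 then some ⟨uv, h⟩
  else if h' : uv.2 < uv.1 then some ⟨(uv.2, uv.1), h'⟩ else none

lemma edgeOf_none {uv : Fin n × Fin n} (h : pairOf uv = none) (g : PairIdx n → Bool) :
    edgeOf g uv.1 uv.2 = false := by
  unfold pairOf at h
  unfold edgeOf
  split_ifs at h ⊢ <;> simp_all

lemma edgeOf_some {uv : Fin n × Fin n} {p : PairIdx n} (h : pairOf uv = some p)
    (g : PairIdx n → Bool) : edgeOf g uv.1 uv.2 = g p := by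
  unfold pairOf at h
  unfold edgeOf
  split_ifs at h ⊢ <;> simp_all

/-- The set of pairs whose edge value is pinned down by the first `t` answers. -/
def pinned (g : PairIdx n → Bool) : ℕ → Finset (PairIdx n)
  | 0 => ∅
  | t+1 => pinned g t ∪ ((pairOf (Q (ansl Q g t))).elim ∅ (fun p => {p}))

lemma ansl_take (g : PairIdx n → Bool) {t k : ℕ} (hk : k ≤ t) :
    ansl Q g k = (ansl Q g t).take k := by
  induction t with
  | zero =>
    interval_cases k
    simp [ansl_zero]
  | succ t ih =>
    rcases Nat.lt_or_ge k (t+1) with h | h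
    · have hk' : k ≤ t := Nat.lt_succ_iff.mp h
      rw [ih hk', ansl_succ, List.take_append_of_le_length (by rw [ansl_length]; exact hk')]
    · have : k = t + 1 := le_antisymm hk h
      subst this
      rw [List.take_of_length_le (by rw [ansl_length])]

lemma pinned_congr {g g' : PairIdx n → Bool} (t : ℕ) (h : ansl Q g' t = ansl Q g t) :
    pinned Q g' t = pinned Q g t := by
  induction t with
  | zero => rfl
  | succ t ih =>
    have h1 : ansl Q g' t = ansl Q g t := by
      rw [ansl_take Q g' (Nat.le_succ t), ansl_take Q g (Nat.le_succ t), h]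
    unfold pinned
    rw [ih h1, h1]

lemma cyl (g : PairIdx n → Bool) (t : ℕ) :
    {g' | ansl Q g' t = ansl Q g t} = {g' | ∀ p ∈ pinned Q g t, g' p = g p} := by
  induction t with
  | zero =>
    ext g'
    simp [ansl_zero, pinned]
  | succ t ih =>
    have ih' : ∀ g', ansl Q g' t = ansl Q g t ↔ ∀ p ∈ pinned Q g t, g' p = g p :=
      fun g' => Set.ext_iff.mp ih g'
    ext g'
    simp only [Set.mem_setOf_eq]
    rw [ansl_succ_inj]
    unfold pinned
    simp only [Finset.mem_union, or_imp, forall_and]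
    rw [← ih']
    apply and_congr_right
    intro _
    cases hp : pairOf (Q (ansl Q g t)) with
    | none =>
      rw [edgeOf_none hp g', edgeOf_none hp g]
      simp [hp]
    | some p =>
      rw [edgeOf_some hp g', edgeOf_some hp g]
      simp [hp]

end Transcript

section Measure

variable {n : ℕ} {ρ : ℝ}

/-- The planted density as a mass function on the product space. -/
noncomputable def mu (n : ℕ) (ρ : ℝ) : ((Fin n → Bool) × (PairIdx n → Bool)) → ℝ :=
  fun ω => plantedDensity n ρ ω.1 ω.2

lemma prob_eq_sum_indicator {Ω : Type*} [Fintype Ω] (μ : Ω → ℝ) (E : Set Ω) :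
    prob μ E = ∑ ω, E.indicator μ ω := by
  unfold prob
  refine Finset.sum_congr rfl fun ω _ => ?_
  by_cases h : ω ∈ E
  · rw [if_pos h, Set.indicator_of_mem h]
  · rw [if_neg h, Set.indicator_of_notMem h]

lemma cp_nonneg (h0 : 0 < ρ) (h1 : ρ < 1/4) (x : Fin n → Bool)
    (A : Set (PairIdx n → Bool)) : 0 ≤ cp ρ x A :=
  Finset.sum_nonneg fun g _ => Set.indicator_nonneg
    (fun g _ => (nu_pos h0 h1 x g).le) g

lemma cp_pos (h0 : 0 < ρ) (h1 : ρ < 1/4) (x : Fin n → Bool)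
    {A : Set (PairIdx n → Bool)} {g : PairIdx n → Bool} (hg : g ∈ A) :
    0 < cp ρ x A := by
  have : 0 < A.indicator (nu ρ x) g := by
    rw [Set.indicator_of_mem hg]; exact nu_pos h0 h1 x g
  exact lt_of_lt_of_le this (Finset.single_le_sum
    (fun g _ => Set.indicator_nonneg (fun g _ => (nu_pos h0 h1 x g).le) g)
    (Finset.mem_univ g))

lemma cp_univ (x : Fin n → Bool) : cp ρ x Set.univ = 1 := by
  unfold cp
  simp only [Set.indicator_univ]
  exact sum_nu x

lemma cp_congr {x : Fin n → Bool} {A B : Set (PairIdx n → Bool)} (h : A = B) :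
    cp ρ x A = cp ρ x B := by rw [h]

lemma prob_split (x : Fin n → Bool) (A : Set (PairIdx n → Bool)) :
    prob (mu n ρ) {ω' | ω'.1 = x ∧ ω'.2 ∈ A} = ((2:ℝ)^n)⁻¹ * cp ρ x A := by
  rw [prob_eq_sum_indicator, Fintype.sum_prod_type]
  rw [Finset.sum_eq_single x]
  · unfold cp
    rw [Finset.mul_sum]
    refine Finset.sum_congr rfl fun g _ => ?_
    by_cases hg : g ∈ A
    · rw [Set.indicator_of_mem (by exact ⟨rfl, hg⟩), Set.indicator_of_mem hg]
      exact planted_eq x g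
    · rw [Set.indicator_of_notMem (fun hc => hg hc.2), Set.indicator_of_notMem hg]
      ring
  · intro y _ hy
    refine Finset.sum_eq_zero fun g _ => ?_
    exact Set.indicator_of_notMem (fun hc => hy hc.1) _
  · intro hx
    exact absurd (Finset.mem_univ x) hx

lemma prob_snd (A : Set (PairIdx n → Bool)) :
    prob (mu n ρ) {ω' | ω'.2 ∈ A} = ((2:ℝ)^n)⁻¹ * ∑ x, cp ρ x A := by
  rw [prob_eq_sum_indicator, Fintype.sum_prod_type, Finset.mul_sum]
  refine Finset.sum_congr rfl fun x _ => ?_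
  unfold cp
  rw [Finset.mul_sum]
  refine Finset.sum_congr rfl fun g _ => ?_
  by_cases hg : g ∈ A
  · rw [Set.indicator_of_mem (by exact hg), Set.indicator_of_mem hg]
    exact planted_eq x g
  · rw [Set.indicator_of_notMem (by exact hg), Set.indicator_of_notMem hg]
    ring

lemma prob_fst (x : Fin n → Bool) :
    prob (mu n ρ) {ω' | ω'.1 = x} = ((2:ℝ)^n)⁻¹ := by
  have h : {ω' : (Fin n → Bool) × (PairIdx n → Bool) | ω'.1 = x}
      = {ω' | ω'.1 = x ∧ ω'.2 ∈ Set.univ} := by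
    ext ω'; simp
  rw [h, prob_split, cp_univ, mul_one]

lemma sum_mu : ∑ ω, mu n ρ ω = 1 := by
  unfold mu
  rw [Fintype.sum_prod_type]
  have : ∀ x : Fin n → Bool, ∑ g, plantedDensity n ρ x g = ((2:ℝ)^n)⁻¹ := by
    intro x
    rw [Finset.sum_congr rfl fun g _ => planted_eq x g, ← Finset.mul_sum, sum_nu, mul_one]
  rw [Finset.sum_congr rfl fun x _ => this x, Finset.sum_const]
  simp

lemma mu_pos (h0 : 0 < ρ) (h1 : ρ < 1/4) (ω : (Fin n → Bool) × (PairIdx n → Bool)) :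
    0 < mu n ρ ω := by
  unfold mu
  rw [planted_eq]
  have := nu_pos h0 h1 ω.1 ω.2
  positivity
end Measure

section Info

variable {n : ℕ} {ρ : ℝ}

/-- The event that the `t`-step answer list matches that of `g`. -/
def Eg (Q : List Bool → Fin n × Fin n) (t : ℕ) (g : PairIdx n → Bool) :
    Set (PairIdx n → Bool) := {g' | ansl Q g' t = ansl Q g t}

lemma self_mem_Eg (Q : List Bool → Fin n × Fin n) (t : ℕ) (g : PairIdx n → Bool) :
    g ∈ Eg Q t g := rfl

/-- The mutual information, shifted by `n`. -/
noncomputable def Jq (n : ℕ) (ρ : ℝ) (Q : List Bool → Fin n × Fin n) (t : ℕ) : ℝ :=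
  ∑ ω, mu n ρ ω * (Real.logb 2 (cp ρ ω.1 (Eg Q t ω.2))
    - Real.logb 2 (∑ x, cp ρ x (Eg Q t ω.2)))

lemma sum_cp_pos (h0 : 0 < ρ) (h1 : ρ < 1/4) (Q : List Bool → Fin n × Fin n)
    (t : ℕ) (g : PairIdx n → Bool) :
    0 < ∑ x, cp ρ x (Eg Q t g) :=
  Finset.sum_pos (fun x _ => cp_pos h0 h1 x (self_mem_Eg Q t g)) Finset.univ_nonempty

lemma hln {n : ℕ} : Real.logb 2 (((2:ℝ)^n)⁻¹) = -n := by
  rw [Real.logb_inv, Real.logb_pow, Real.logb_self_eq_one (by norm_num), mul_one]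

lemma prob_tr (Q : List Bool → Fin n × Fin n) (q : ℕ) (g : PairIdx n → Bool) :
    prob (mu n ρ) {ω' | transcript Q ω'.2 q = transcript Q g q}
      = ((2:ℝ)^n)⁻¹ * ∑ x, cp ρ x (Eg Q q g) := by
  have htr : {ω' : (Fin n → Bool) × (PairIdx n → Bool) |
      transcript Q ω'.2 q = transcript Q g q} = {ω' | ω'.2 ∈ Eg Q q g} := by
    ext ω'
    exact transcript_eq_iff Q g ω'.2 q
  rw [htr, prob_snd]

lemma prob_trX (Q : List Bool → Fin n × Fin n) (q : ℕ) (x : Fin n → Bool)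
    (g : PairIdx n → Bool) :
    prob (mu n ρ) {ω' | (ω'.1, transcript Q ω'.2 q) = (x, transcript Q g q)}
      = ((2:ℝ)^n)⁻¹ * cp ρ x (Eg Q q g) := by
  have hpair : {ω' : (Fin n → Bool) × (PairIdx n → Bool) |
      (ω'.1, transcript Q ω'.2 q) = (x, transcript Q g q)}
      = {ω' | ω'.1 = x ∧ ω'.2 ∈ Eg Q q g} := by
    ext ω'
    simp only [Set.mem_setOf_eq, Prod.mk.injEq]
    exact and_congr Iff.rfl (transcript_eq_iff Q g ω'.2 q)
  rw [hpair, prob_split]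

lemma mutinfo_eq (h0 : 0 < ρ) (h1 : ρ < 1/4) (Q : List Bool → Fin n × Fin n) (q : ℕ) :
    mutInfo (mu n ρ) (fun ω => ω.1) (fun ω => transcript Q ω.2 q) = Jq n ρ Q q + n := by
  have ha : ∀ ω : (Fin n → Bool) × (PairIdx n → Bool),
      0 < cp ρ ω.1 (Eg Q q ω.2) := fun ω => cp_pos h0 h1 ω.1 (self_mem_Eg Q q ω.2)
  have hb : ∀ g, 0 < ∑ x, cp ρ x (Eg Q q g) := sum_cp_pos h0 h1 Q q
  have h2n : ((2:ℝ)^n)⁻¹ ≠ 0 := by positivity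
  unfold mutInfo entropy Jq
  simp only [prob_fst, prob_tr, prob_trX, hln]
  have l1 : ∀ ω : (Fin n → Bool) × (PairIdx n → Bool),
      mu n ρ ω * Real.logb 2 (((2:ℝ)^n)⁻¹ * cp ρ ω.1 (Eg Q q ω.2))
      = mu n ρ ω * (-(n:ℝ)) + mu n ρ ω * Real.logb 2 (cp ρ ω.1 (Eg Q q ω.2)) := by
    intro ω
    rw [Real.logb_mul h2n (ne_of_gt (ha ω)), hln, mul_add]
  have l2 : ∀ ω : (Fin n → Bool) × (PairIdx n → Bool),
      mu n ρ ω * Real.logb 2 (((2:ℝ)^n)⁻¹ * ∑ x, cp ρ x (Eg Q q ω.2))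
      = mu n ρ ω * (-(n:ℝ)) + mu n ρ ω * Real.logb 2 (∑ x, cp ρ x (Eg Q q ω.2)) := by
    intro ω
    rw [Real.logb_mul h2n (ne_of_gt (hb ω.2)), hln, mul_add]
  have l3 : ∀ ω : (Fin n → Bool) × (PairIdx n → Bool),
      mu n ρ ω * (Real.logb 2 (cp ρ ω.1 (Eg Q q ω.2))
        - Real.logb 2 (∑ x, cp ρ x (Eg Q q ω.2)))
      = mu n ρ ω * Real.logb 2 (cp ρ ω.1 (Eg Q q ω.2))
        - mu n ρ ω * Real.logb 2 (∑ x, cp ρ x (Eg Q q ω.2)) := fun ω => mul_sub _ _ _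
  rw [Finset.sum_congr rfl fun ω _ => l1 ω, Finset.sum_congr rfl fun ω _ => l2 ω,
    Finset.sum_congr rfl fun ω _ => l3 ω]
  rw [Finset.sum_add_distrib, Finset.sum_add_distrib, Finset.sum_sub_distrib]
  have hsum : ∑ ω : (Fin n → Bool) × (PairIdx n → Bool), mu n ρ ω * (-(n:ℝ)) = -n := by
    rw [← Finset.sum_mul, sum_mu, one_mul]
  rw [hsum]
  ring

end Info

section Scalar

/-- The per-query information cost: `1 - h₂(1/2+ρ)`. -/
noncomputable def c0 (ρ : ℝ) : ℝ :=
  1 + ((1/2+ρ) * Real.logb 2 (1/2+ρ) + (1/2-ρ) * Real.logb 2 (1/2-ρ))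

lemma binent_le_one {m : ℝ} (hm0 : 0 < m) (hm1 : m < 1) :
    -1 ≤ m * Real.logb 2 m + (1-m) * Real.logb 2 (1-m) := by
  have h2 : (0:ℝ) < Real.log 2 := Real.log_pos (by norm_num)
  have hm1' : (0:ℝ) < 1 - m := by linarith
  have k1 : 1 - (2*m)⁻¹ ≤ Real.log (2*m) := Real.one_sub_inv_le_log_of_pos (by positivity)
  have k2 : 1 - (2*(1-m))⁻¹ ≤ Real.log (2*(1-m)) :=
    Real.one_sub_inv_le_log_of_pos (by positivity)
  rw [Real.log_mul (by norm_num) (ne_of_gt hm0)] at k1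
  rw [Real.log_mul (by norm_num) (ne_of_gt hm1')] at k2
  have q1 : m - 1/2 ≤ m * (Real.log 2 + Real.log m) := by
    have := mul_le_mul_of_nonneg_left k1 hm0.le
    have e : m * (1 - (2*m)⁻¹) = m - 1/2 := by field_simp
    linarith [e ▸ this]
  have q2 : (1-m) - 1/2 ≤ (1-m) * (Real.log 2 + Real.log (1-m)) := by
    have := mul_le_mul_of_nonneg_left k2 hm1'.le
    have e : (1-m) * (1 - (2*(1-m))⁻¹) = (1-m) - 1/2 := by field_simp
    linarith [e ▸ this]
  have hkey : -(Real.log 2) ≤ m * Real.log m + (1-m) * Real.log (1-m) := by nlinarith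
  have : m * Real.logb 2 m + (1-m) * Real.logb 2 (1-m)
      = (m * Real.log m + (1-m) * Real.log (1-m)) / Real.log 2 := by
    unfold Real.logb
    ring
  rw [this, le_div_iff₀ h2]
  linarith

lemma c0_nonneg {ρ : ℝ} (h0 : 0 < ρ) (h1 : ρ < 1/4) : 0 ≤ c0 ρ := by
  have := binent_le_one (m := 1/2 + ρ) (by linarith) (by linarith)
  rw [show (1:ℝ) - (1/2 + ρ) = 1/2 - ρ by ring] at this
  unfold c0
  linarith

lemma c0_le {ρ : ℝ} (h0 : 0 < ρ) (h1 : ρ < 1/4) : c0 ρ ≤ 6 * ρ^2 := by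
  have h2 : (0:ℝ) < Real.log 2 := Real.log_pos (by norm_num)
  have e1 : Real.log (1/2+ρ) = Real.log (1+2*ρ) - Real.log 2 := by
    rw [show (1/2+ρ : ℝ) = (1+2*ρ)/2 by ring, Real.log_div (by linarith) (by norm_num)]
  have e2 : Real.log (1/2-ρ) = Real.log (1-2*ρ) - Real.log 2 := by
    rw [show (1/2-ρ : ℝ) = (1-2*ρ)/2 by ring, Real.log_div (by linarith) (by norm_num)]
  have b1 : Real.log (1+2*ρ) ≤ 2*ρ := by
    have := Real.log_le_sub_one_of_pos (show (0:ℝ) < 1+2*ρ by linarith)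
    linarith
  have b2 : Real.log (1-2*ρ) ≤ -(2*ρ) := by
    have := Real.log_le_sub_one_of_pos (show (0:ℝ) < 1-2*ρ by linarith)
    linarith
  have c1 : (1/2+ρ)*Real.log (1+2*ρ) ≤ (1/2+ρ)*(2*ρ) :=
    mul_le_mul_of_nonneg_left b1 (by linarith)
  have c2 : (1/2-ρ)*Real.log (1-2*ρ) ≤ (1/2-ρ)*(-(2*ρ)) :=
    mul_le_mul_of_nonneg_left b2 (by linarith)
  have expand : c0 ρ = ((1/2+ρ)*Real.log (1+2*ρ) + (1/2-ρ)*Real.log (1-2*ρ))/Real.log 2 := by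
    unfold c0 Real.logb
    rw [e1, e2]
    field_simp
    ring
  rw [expand, div_le_iff₀ h2]
  nlinarith [Real.log_two_gt_d9, sq_nonneg ρ]

lemma key_step {ι : Type*} [Fintype ι] [Nonempty ι] {ρ : ℝ} (h0 : 0 < ρ) (h1 : ρ < 1/4)
    (v : ι → ℝ) (hv : ∀ i, 0 < v i) (a : ι → ℝ)
    (ha : ∀ i, a i = 1/2 + ρ ∨ a i = 1/2 - ρ) :
    ∑ i, v i * (a i * (Real.logb 2 (a i) - Real.logb 2 (∑ j, a j * v j)
        + Real.logb 2 (∑ j, v j))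
      + (1 - a i) * (Real.logb 2 (1 - a i) - Real.logb 2 (∑ j, (1 - a j) * v j)
        + Real.logb 2 (∑ j, v j)))
    ≤ c0 ρ * ∑ j, v j := by
  have hSv : 0 < ∑ j, v j := Finset.sum_pos (fun j _ => hv j) Finset.univ_nonempty
  set Sv : ℝ := ∑ j, v j with hSvdef
  set A : ℝ := ∑ j, a j * v j with hAdef
  have hA_ub : A ≤ (1/2+ρ) * Sv := by
    rw [hAdef, hSvdef, Finset.mul_sum]
    refine Finset.sum_le_sum fun j _ => ?_
    rcases ha j with h | h <;> rw [h] <;> nlinarith [hv j]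
  have hA_lb : (1/2-ρ) * Sv ≤ A := by
    rw [hAdef, hSvdef, Finset.mul_sum]
    refine Finset.sum_le_sum fun j _ => ?_
    rcases ha j with h | h <;> rw [h] <;> nlinarith [hv j]
  set m : ℝ := A / Sv with hmdef
  have hmSv : A = m * Sv := by
    rw [hmdef]; field_simp
  have hm_lb : 1/2 - ρ ≤ m := by
    rw [hmdef, le_div_iff₀ hSv]; linarith
  have hm_ub : m ≤ 1/2 + ρ := by
    rw [hmdef, div_le_iff₀ hSv]; linarith
  have hm0 : 0 < m := by linarith
  have hm1 : m < 1 := by linarith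
  have hsub : ∑ j, (1 - a j) * v j = Sv - A := by
    rw [hSvdef, hAdef, ← Finset.sum_sub_distrib]
    exact Finset.sum_congr rfl fun j _ => by ring
  have hlogA : Real.logb 2 A = Real.logb 2 m + Real.logb 2 Sv := by
    rw [hmSv]
    exact Real.logb_mul (ne_of_gt hm0) (ne_of_gt hSv)
  have hlogSA : Real.logb 2 (Sv - A) = Real.logb 2 (1-m) + Real.logb 2 Sv := by
    rw [show Sv - A = (1-m) * Sv by rw [hmSv]; ring]
    exact Real.logb_mul (by linarith) (ne_of_gt hSv)
  have per : ∀ i, v i * (a i * (Real.logb 2 (a i) - Real.logb 2 A + Real.logb 2 Sv)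
      + (1 - a i) * (Real.logb 2 (1 - a i) - Real.logb 2 (Sv - A) + Real.logb 2 Sv))
      = (c0 ρ - 1) * v i - Real.logb 2 m * (a i * v i)
        - Real.logb 2 (1-m) * ((1 - a i) * v i) := by
    intro i
    rw [hlogA, hlogSA]
    rcases ha i with h | h <;> rw [h]
    · rw [show (1:ℝ) - (1/2 + ρ) = 1/2 - ρ by ring]
      unfold c0
      ring
    · rw [show (1:ℝ) - (1/2 - ρ) = 1/2 + ρ by ring]
      unfold c0
      ring
  rw [hsub]
  rw [Finset.sum_congr rfl fun i _ => per i]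
  rw [Finset.sum_sub_distrib, Finset.sum_sub_distrib, ← Finset.mul_sum, ← Finset.mul_sum,
    ← Finset.mul_sum, hsub]
  have hbin := binent_le_one hm0 hm1
  calc (c0 ρ - 1) * Sv - Real.logb 2 m * A - Real.logb 2 (1-m) * (Sv - A)
      = Sv * ((c0 ρ - 1) - (m * Real.logb 2 m + (1-m) * Real.logb 2 (1-m))) := by
        rw [hmSv]; ring
    _ ≤ Sv * (c0 ρ) := by
        apply mul_le_mul_of_nonneg_left _ hSv.le
        linarith
    _ = c0 ρ * Sv := mul_comm _ _

end Scalar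

section Step

variable {n : ℕ} {ρ : ℝ}

lemma pinned_succ_congr (Q : List Bool → Fin n × Fin n) {g g' : PairIdx n → Bool} (t : ℕ)
    (h : ansl Q g' t = ansl Q g t) : pinned Q g' (t+1) = pinned Q g (t+1) := by
  show pinned Q g' t ∪ _ = pinned Q g t ∪ _
  rw [pinned_congr Q t h, h]

lemma pinned_dichotomy (Q : List Bool → Fin n × Fin n) (g : PairIdx n → Bool) (t : ℕ) :
    pinned Q g (t+1) = pinned Q g t ∨
      ∃ p, p ∉ pinned Q g t ∧ pinned Q g (t+1) = insert p (pinned Q g t) := by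
  classical
  show pinned Q g t ∪ ((pairOf (Q (ansl Q g t))).elim ∅ (fun p => {p})) = _ ∨ _
  cases hp : pairOf (Q (ansl Q g t)) with
  | none => left; simp
  | some p =>
    by_cases hmem : p ∈ pinned Q g t
    · left
      simp only [Option.elim]
      rw [Finset.union_comm, Finset.union_eq_right.mpr (by simpa using hmem)]
    · right
      refine ⟨p, hmem, ?_⟩
      show pinned Q g t ∪ _ = _
      rw [hp]
      simp only [Option.elim]
      rw [Finset.union_comm]
      rfl

lemma Eg_congr (Q : List Bool → Fin n × Fin n) {g g' : PairIdx n → Bool} (t : ℕ)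
    (h : ansl Q g' t = ansl Q g t) : Eg Q t g' = Eg Q t g := by
  unfold Eg
  rw [h]

lemma Eg_cyl (Q : List Bool → Fin n × Fin n) (g : PairIdx n → Bool) (t : ℕ) :
    Eg Q t g = {g' | ∀ p ∈ pinned Q g t, g' p = g p} := cyl Q g t

lemma cp_Eg (x : Fin n → Bool) (Q : List Bool → Fin n × Fin n) (g : PairIdx n → Bool)
    (t : ℕ) : cp ρ x (Eg Q t g) = ∏ p ∈ pinned Q g t, wgt ρ x p (g p) := by
  rw [Eg_cyl, cp_cyl]

set_option maxHeartbeats 2000000 in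
lemma Jq_succ (h0 : 0 < ρ) (h1 : ρ < 1/4) (Q : List Bool → Fin n × Fin n) (t : ℕ) :
    Jq n ρ Q (t+1) ≤ Jq n ρ Q t + c0 ρ := by
  classical
  -- the pointwise increment
  set φ : (Fin n → Bool) × (PairIdx n → Bool) → ℝ := fun ω =>
    (Real.logb 2 (cp ρ ω.1 (Eg Q (t+1) ω.2)) - Real.logb 2 (∑ x, cp ρ x (Eg Q (t+1) ω.2)))
    - (Real.logb 2 (cp ρ ω.1 (Eg Q t ω.2)) - Real.logb 2 (∑ x, cp ρ x (Eg Q t ω.2)))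
    with hφdef
  have hdiff : Jq n ρ Q (t+1) - Jq n ρ Q t = ∑ ω, mu n ρ ω * φ ω := by
    unfold Jq
    rw [← Finset.sum_sub_distrib]
    exact Finset.sum_congr rfl fun ω _ => by rw [hφdef]; ring
  have main : ∑ ω, mu n ρ ω * φ ω ≤ c0 ρ := by
    have hsplit := Finset.sum_filter_add_sum_filter_not Finset.univ
      (fun ω : (Fin n → Bool) × (PairIdx n → Bool) =>
        pinned Q ω.2 (t+1) = pinned Q ω.2 t) (fun ω => mu n ρ ω * φ ω)
    have hdet : ∑ ω ∈ Finset.univ.filter (fun ω : (Fin n → Bool) × (PairIdx n → Bool) =>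
        pinned Q ω.2 (t+1) = pinned Q ω.2 t), mu n ρ ω * φ ω = 0 := by
      refine Finset.sum_eq_zero fun ω hω => ?_
      rw [Finset.mem_filter] at hω
      have hEeq : Eg Q (t+1) ω.2 = Eg Q t ω.2 := by
        rw [Eg_cyl, Eg_cyl, hω.2]
      rw [hφdef]
      simp only [hEeq]
      ring
    have hfresh : ∑ ω ∈ Finset.univ.filter (fun ω : (Fin n → Bool) × (PairIdx n → Bool) =>
        ¬ pinned Q ω.2 (t+1) = pinned Q ω.2 t), mu n ρ ω * φ ω ≤
        c0 ρ * ∑ ω ∈ Finset.univ.filter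
          (fun ω : (Fin n → Bool) × (PairIdx n → Bool) =>
            ¬ pinned Q ω.2 (t+1) = pinned Q ω.2 t), mu n ρ ω := by
      set Fr := Finset.univ.filter (fun ω : (Fin n → Bool) × (PairIdx n → Bool) =>
        ¬ pinned Q ω.2 (t+1) = pinned Q ω.2 t) with hFrdef
      have hmaps : ∀ ω ∈ Fr, (fun ω : (Fin n → Bool) × (PairIdx n → Bool) =>
          ansl Q ω.2 t) ω ∈ Fr.image (fun ω => ansl Q ω.2 t) :=
        fun ω h => Finset.mem_image_of_mem _ h
      rw [← Finset.sum_fiberwise_of_maps_to hmaps (fun ω => mu n ρ ω * φ ω),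
        ← Finset.sum_fiberwise_of_maps_to hmaps (mu n ρ), Finset.mul_sum]
      refine Finset.sum_le_sum fun s hs => ?_
      obtain ⟨ω₀, hω₀Fr, hk₀⟩ := Finset.mem_image.mp hs
      subst hk₀
      have hfr₀ : ¬ pinned Q ω₀.2 (t+1) = pinned Q ω₀.2 t := by
        have := (Finset.mem_filter.mp (hFrdef ▸ hω₀Fr)).2
        exact this
      obtain ⟨p, hp, hpin⟩ := (pinned_dichotomy Q ω₀.2 t).resolve_left hfr₀
      have hC : Fr.filter (fun ω => ansl Q ω.2 t = ansl Q ω₀.2 t)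
          = Finset.univ.filter (fun ω : (Fin n → Bool) × (PairIdx n → Bool) =>
              ansl Q ω.2 t = ansl Q ω₀.2 t) := by
        ext ω
        rw [hFrdef]
        simp only [Finset.mem_filter, Finset.mem_univ, true_and]
        constructor
        · rintro ⟨_, hkω⟩
          exact hkω
        · intro hcl
          refine ⟨?_, hcl⟩
          rw [pinned_succ_congr Q t hcl, pinned_congr Q t hcl]
          exact hfr₀
      rw [hC]
      -- class-level data
      set v : (Fin n → Bool) → ℝ := fun x => cp ρ x (Eg Q t ω₀.2) with hvdef
      have hv : ∀ x, 0 < v x := fun x => cp_pos h0 h1 x (self_mem_Eg Q t ω₀.2)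
      have hSv : 0 < ∑ x, v x := Finset.sum_pos (fun x _ => hv x) Finset.univ_nonempty
      have hag0 : ∀ g' : PairIdx n → Bool, ansl Q g' t = ansl Q ω₀.2 t ↔
          ∀ p' ∈ pinned Q ω₀.2 t, g' p' = ω₀.2 p' :=
        fun g' => Set.ext_iff.mp (Eg_cyl Q ω₀.2 t) g'
      -- the conditional probability of the fresh bit
      have hBβ : ∀ (x : Fin n → Bool) (β : Bool),
          cp ρ x {g' | ansl Q g' t = ansl Q ω₀.2 t ∧ g' p = β}
            = wgt ρ x p β * v x := by
        intro x β
        have hset : {g' | ansl Q g' t = ansl Q ω₀.2 t ∧ g' p = β}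
            = {g' | ∀ p' ∈ insert p (pinned Q ω₀.2 t), g' p'
                = Function.update ω₀.2 p β p'} := by
          ext g'
          simp only [Set.mem_setOf_eq]
          constructor
          · rintro ⟨hcl, hb⟩
            intro p' hp'
            rcases Finset.mem_insert.mp hp' with rfl | hp'S
            · rw [Function.update_self]; exact hb
            · rw [Function.update_of_ne (show p' ≠ p by rintro rfl; exact hp hp'S)]
              exact (hag0 g').mp hcl p' hp'S
          · intro h
            have hb := h p (Finset.mem_insert_self p _)
            rw [Function.update_self] at hb
            have hcl : ∀ p' ∈ pinned Q ω₀.2 t, g' p' = ω₀.2 p' := by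
              intro p' hp'S
              have := h p' (Finset.mem_insert_of_mem hp'S)
              rwa [Function.update_of_ne (show p' ≠ p by rintro rfl; exact hp hp'S)] at this
            exact ⟨(hag0 g').mpr hcl, hb⟩
        rw [hset, cp_cyl, Finset.prod_insert hp, Function.update_self]
        congr 1
        rw [hvdef]
        simp only []
        rw [cp_Eg]
        exact Finset.prod_congr rfl fun p' hp'S => by
          rw [Function.update_of_ne (show p' ≠ p by rintro rfl; exact hp hp'S)]
      -- splitting a class sum according to the fresh bit
      have class_split : ∀ G : (Fin n → Bool) → Bool → ℝ,
          ∑ ω ∈ Finset.univ.filter (fun ω : (Fin n → Bool) × (PairIdx n → Bool) =>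
              ansl Q ω.2 t = ansl Q ω₀.2 t), mu n ρ ω * G ω.1 (ω.2 p)
          = ((2:ℝ)^n)⁻¹ * ∑ x, (wgt ρ x p true * v x * G x true
              + wgt ρ x p false * v x * G x false) := by
        intro G
        rw [Finset.sum_filter, Fintype.sum_prod_type, Finset.mul_sum]
        refine Finset.sum_congr rfl fun x _ => ?_
        have pointwise : ∀ g : PairIdx n → Bool,
            (if ansl Q g t = ansl Q ω₀.2 t then mu n ρ (x, g) * G x (g p) else 0)
            = ((2:ℝ)^n)⁻¹ *
              (({g' | ansl Q g' t = ansl Q ω₀.2 t ∧ g' p = true} : Set _).indicator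
                  (nu ρ x) g * G x true
                + ({g' | ansl Q g' t = ansl Q ω₀.2 t ∧ g' p = false} : Set _).indicator
                  (nu ρ x) g * G x false) := by
          intro g
          by_cases hcl : ansl Q g t = ansl Q ω₀.2 t
          · rw [if_pos hcl]
            have hmu : mu n ρ (x, g) = ((2:ℝ)^n)⁻¹ * nu ρ x g := planted_eq x g
            cases hb : g p
            · rw [Set.indicator_of_notMem (show g ∉ {g' | ansl Q g' t = ansl Q ω₀.2 t
                  ∧ g' p = true} from fun hc => by simp [Set.mem_setOf_eq, hb] at hc),
                Set.indicator_of_mem (show g ∈ {g' | ansl Q g' t = ansl Q ω₀.2 t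
                  ∧ g' p = false} from ⟨hcl, hb⟩), hmu]
              ring
            · rw [Set.indicator_of_mem (show g ∈ {g' | ansl Q g' t = ansl Q ω₀.2 t
                  ∧ g' p = true} from ⟨hcl, hb⟩),
                Set.indicator_of_notMem (show g ∉ {g' | ansl Q g' t = ansl Q ω₀.2 t
                  ∧ g' p = false} from fun hc => by simp [Set.mem_setOf_eq, hb] at hc), hmu]
              ring
          · rw [if_neg hcl, Set.indicator_of_notMem (fun hc => hcl hc.1),
              Set.indicator_of_notMem (fun hc => hcl hc.1)]
            ring
        refine (Finset.sum_congr rfl fun g _ => pointwise g).trans ?_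
        rw [← Finset.mul_sum]
        congr 1
        rw [Finset.sum_add_distrib, ← Finset.sum_mul, ← Finset.sum_mul]
        rw [show (∑ g, ({g' | ansl Q g' t = ansl Q ω₀.2 t ∧ g' p = true} : Set _).indicator
            (nu ρ x) g) = wgt ρ x p true * v x from hBβ x true]
        rw [show (∑ g, ({g' | ansl Q g' t = ansl Q ω₀.2 t ∧ g' p = false} : Set _).indicator
            (nu ρ x) g) = wgt ρ x p false * v x from hBβ x false]
      -- pointwise simplification of the increment on the class
      have hφC : ∀ ω ∈ Finset.univ.filter
          (fun ω : (Fin n → Bool) × (PairIdx n → Bool) =>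
            ansl Q ω.2 t = ansl Q ω₀.2 t),
          mu n ρ ω * φ ω = mu n ρ ω *
            (Real.logb 2 (wgt ρ ω.1 p (ω.2 p))
              - Real.logb 2 (∑ x, wgt ρ x p (ω.2 p) * v x)
              + Real.logb 2 (∑ x, v x)) := by
        intro ω hω
        have hcl : ansl Q ω.2 t = ansl Q ω₀.2 t := (Finset.mem_filter.mp hω).2
        have hfa : ∀ x, cp ρ x (Eg Q (t+1) ω.2) = wgt ρ x p (ω.2 p) * v x := by
          intro x
          rw [Eg_cyl Q ω.2 (t+1), pinned_succ_congr Q t hcl, hpin, cp_cyl,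
            Finset.prod_insert hp]
          congr 1
          rw [hvdef]
          simp only []
          rw [cp_Eg]
          exact Finset.prod_congr rfl fun p' hp'S => by
            rw [(hag0 ω.2).mp hcl p' hp'S]
        have hvx : cp ρ ω.1 (Eg Q t ω.2) = v ω.1 := by rw [Eg_congr Q t hcl]
        have hb' : (∑ x, cp ρ x (Eg Q (t+1) ω.2)) = ∑ x, wgt ρ x p (ω.2 p) * v x :=
          Finset.sum_congr rfl fun x _ => hfa x
        have hbt : (∑ x, cp ρ x (Eg Q t ω.2)) = ∑ x, v x :=
          Finset.sum_congr rfl fun x _ => by rw [Eg_congr Q t hcl]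
        rw [hφdef]
        simp only []
        rw [hfa ω.1, hvx, hb', hbt,
          Real.logb_mul (ne_of_gt (wgt_pos h0 h1 ω.1 p (ω.2 p))) (ne_of_gt (hv ω.1))]
        ring
      -- put it together via the key scalar estimate
      have hmass : ∑ ω ∈ Finset.univ.filter
          (fun ω : (Fin n → Bool) × (PairIdx n → Bool) =>
            ansl Q ω.2 t = ansl Q ω₀.2 t), mu n ρ ω
          = ((2:ℝ)^n)⁻¹ * ∑ x, v x := by
        have h1' := class_split (fun _ _ => (1:ℝ))
        rw [Finset.sum_congr rfl (fun ω _ => (mul_one (mu n ρ ω)).symm), h1']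
        congr 1
        refine Finset.sum_congr rfl fun x _ => ?_
        rw [mul_one, mul_one, ← add_mul, wgt_total, one_mul]
      calc ∑ ω ∈ Finset.univ.filter
            (fun ω : (Fin n → Bool) × (PairIdx n → Bool) =>
              ansl Q ω.2 t = ansl Q ω₀.2 t), mu n ρ ω * φ ω
          = ∑ ω ∈ Finset.univ.filter
            (fun ω : (Fin n → Bool) × (PairIdx n → Bool) =>
              ansl Q ω.2 t = ansl Q ω₀.2 t), mu n ρ ω *
              ((fun (x : Fin n → Bool) (β : Bool) => Real.logb 2 (wgt ρ x p β)
                - Real.logb 2 (∑ x', wgt ρ x' p β * v x')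
                + Real.logb 2 (∑ x', v x')) ω.1 (ω.2 p)) :=
            Finset.sum_congr rfl hφC
        _ = ((2:ℝ)^n)⁻¹ * ∑ x, (wgt ρ x p true * v x *
              (Real.logb 2 (wgt ρ x p true)
                - Real.logb 2 (∑ x', wgt ρ x' p true * v x')
                + Real.logb 2 (∑ x', v x'))
              + wgt ρ x p false * v x *
              (Real.logb 2 (wgt ρ x p false)
                - Real.logb 2 (∑ x', wgt ρ x' p false * v x')
                + Real.logb 2 (∑ x', v x'))) :=
            class_split (fun x β => Real.logb 2 (wgt ρ x p β)
              - Real.logb 2 (∑ x', wgt ρ x' p β * v x')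
              + Real.logb 2 (∑ x', v x'))
        _ ≤ ((2:ℝ)^n)⁻¹ * (c0 ρ * ∑ x, v x) := by
            refine mul_le_mul_of_nonneg_left ?_ (by positivity)
            have hWf : (∑ x', wgt ρ x' p false * v x')
                = ∑ x', (1 - wgt ρ x' p true) * v x' :=
              Finset.sum_congr rfl fun x' _ => by rw [wgt_false]
            calc ∑ x, (wgt ρ x p true * v x *
                  (Real.logb 2 (wgt ρ x p true)
                    - Real.logb 2 (∑ x', wgt ρ x' p true * v x')
                    + Real.logb 2 (∑ x', v x'))
                  + wgt ρ x p false * v x *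
                  (Real.logb 2 (wgt ρ x p false)
                    - Real.logb 2 (∑ x', wgt ρ x' p false * v x')
                    + Real.logb 2 (∑ x', v x')))
                = ∑ x, v x * (wgt ρ x p true *
                    (Real.logb 2 (wgt ρ x p true)
                      - Real.logb 2 (∑ x', wgt ρ x' p true * v x')
                      + Real.logb 2 (∑ x', v x'))
                  + (1 - wgt ρ x p true) *
                    (Real.logb 2 (1 - wgt ρ x p true)
                      - Real.logb 2 (∑ x', (1 - wgt ρ x' p true) * v x')
                      + Real.logb 2 (∑ x', v x'))) := by
                  refine Finset.sum_congr rfl fun x _ => ?_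
                  rw [hWf, wgt_false]
                  ring
              _ ≤ c0 ρ * ∑ x, v x :=
                  key_step h0 h1 v hv (fun x => wgt ρ x p true)
                    (fun x => wgt_cases x p true)
        _ = c0 ρ * (((2:ℝ)^n)⁻¹ * ∑ x, v x) := by ring
        _ = c0 ρ * ∑ ω ∈ Finset.univ.filter
            (fun ω : (Fin n → Bool) × (PairIdx n → Bool) =>
              ansl Q ω.2 t = ansl Q ω₀.2 t), mu n ρ ω := by rw [hmass]
    have hmass : ∑ ω ∈ Finset.univ.filter
        (fun ω : (Fin n → Bool) × (PairIdx n → Bool) =>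
          ¬ pinned Q ω.2 (t+1) = pinned Q ω.2 t), mu n ρ ω ≤ 1 := by
      rw [← sum_mu (n := n) (ρ := ρ)]
      exact Finset.sum_le_sum_of_subset_of_nonneg (Finset.filter_subset _ _)
        (fun ω _ _ => (mu_pos h0 h1 ω).le)
    have hc0 := c0_nonneg h0 h1
    calc ∑ ω, mu n ρ ω * φ ω
        = ∑ ω ∈ Finset.univ.filter (fun ω : (Fin n → Bool) × (PairIdx n → Bool) =>
            pinned Q ω.2 (t+1) = pinned Q ω.2 t), mu n ρ ω * φ ω
          + ∑ ω ∈ Finset.univ.filter (fun ω : (Fin n → Bool) × (PairIdx n → Bool) =>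
            ¬ pinned Q ω.2 (t+1) = pinned Q ω.2 t), mu n ρ ω * φ ω := hsplit.symm
      _ ≤ 0 + c0 ρ * 1 := by
          rw [hdet]
          refine add_le_add le_rfl (hfresh.trans ?_)
          exact mul_le_mul_of_nonneg_left hmass hc0
      _ = c0 ρ := by ring
  linarith [hdiff, main]

lemma Jq_zero (Q : List Bool → Fin n × Fin n) : Jq n ρ Q 0 = -n := by
  unfold Jq
  have hE : ∀ g : PairIdx n → Bool, Eg Q 0 g = Set.univ := fun g => by
    ext g'
    simp [Eg, ansl_zero]
  have hterm : ∀ ω : (Fin n → Bool) × (PairIdx n → Bool),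
      mu n ρ ω * (Real.logb 2 (cp ρ ω.1 (Eg Q 0 ω.2))
        - Real.logb 2 (∑ x, cp ρ x (Eg Q 0 ω.2))) = mu n ρ ω * (-(n:ℝ)) := by
    intro ω
    rw [hE ω.2, cp_univ,
      show (∑ x : Fin n → Bool, cp ρ x Set.univ) = (2:ℝ)^n by
        rw [Finset.sum_congr rfl fun x _ => cp_univ x]; simp,
      Real.logb_one, Real.logb_pow, Real.logb_self_eq_one (by norm_num), mul_one]
    ring
  rw [Finset.sum_congr rfl fun ω _ => hterm ω, ← Finset.sum_mul, sum_mu, one_mul]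

lemma Jq_le (h0 : 0 < ρ) (h1 : ρ < 1/4) (Q : List Bool → Fin n × Fin n) (q : ℕ) :
    Jq n ρ Q q ≤ -n + q * c0 ρ := by
  induction q with
  | zero => rw [Jq_zero]; simp
  | succ q ih =>
    have hstep := Jq_succ h0 h1 Q q
    push_cast
    push_cast at ih
    linarith

end Step

end PP

theorem adaptive_transcript_mutInfo_bound (ε : ℕ → ℝ) (hub : ∀ n, ε n < 0.001)
    (hlb : Filter.Tendsto (fun n => ε n * Real.sqrt ((n : ℝ) / Real.log n))
      Filter.atTop Filter.atTop) :
    ∃ N : ℕ, ∀ n : ℕ, N ≤ n → ∀ q : ℕ, (q : ℝ) ≤ 1e-8 * n / (ε n) ^ 2 →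
      ∀ Q : List Bool → Fin n × Fin n,
        mutInfo (fun ω : (Fin n → Bool) × (PairIdx n → Bool) =>
            plantedDensity n (100 * ε n) ω.1 ω.2)
          (fun ω => ω.1) (fun ω => transcript Q ω.2 q) < 0.0025 * n := by
  obtain ⟨N₀, hN₀⟩ := Filter.eventually_atTop.mp (hlb.eventually_ge_atTop 1)
  refine ⟨max N₀ 3, fun n hn q hq Q => ?_⟩
  have hn₀ : N₀ ≤ n := le_trans (le_max_left _ _) hn
  have hn3 : (3:ℕ) ≤ n := le_trans (le_max_right _ _) hn
  have hnR : (3:ℝ) ≤ n := by exact_mod_cast hn3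
  have hε_pos : 0 < ε n := by
    have h1 := hN₀ n hn₀
    have hsq : 0 ≤ Real.sqrt ((n : ℝ) / Real.log n) := Real.sqrt_nonneg _
    by_contra h
    push_neg at h
    nlinarith
  set ρ : ℝ := 100 * ε n with hρdef
  have h0 : 0 < ρ := by positivity
  have h1 : ρ < 1/4 := by
    have := hub n
    rw [hρdef]
    linarith
  have hε2 : 0 < (ε n)^2 := by positivity
  have heq : (fun ω : (Fin n → Bool) × (PairIdx n → Bool) =>
      plantedDensity n (100 * ε n) ω.1 ω.2) = PP.mu n ρ := rfl
  rw [heq, PP.mutinfo_eq h0 h1 Q q]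
  have hJ := PP.Jq_le h0 h1 Q q
  have hc := PP.c0_le h0 h1
  have hc0 : 0 ≤ PP.c0 ρ := PP.c0_nonneg h0 h1
  have hq0 : (0:ℝ) ≤ (q:ℝ) := Nat.cast_nonneg q
  have step1 : PP.Jq n ρ Q q + (n:ℝ) ≤ (q:ℝ) * PP.c0 ρ := by linarith
  have step2 : (q:ℝ) * PP.c0 ρ ≤ (q:ℝ) * (6 * ρ^2) :=
    mul_le_mul_of_nonneg_left hc hq0
  have step3 : (q:ℝ) * (6 * ρ^2) ≤ (1e-8 * n / (ε n)^2) * (6 * ρ^2) :=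
    mul_le_mul_of_nonneg_right hq (by positivity)
  have step4 : (1e-8 * n / (ε n)^2) * (6 * ρ^2) = 6e-4 * n := by
    rw [hρdef]
    field_simp
    ring
  have step5 : 6e-4 * (n:ℝ) < 0.0025 * n := by nlinarith
  linarith
end

section
/- Let n ≥ 10 and k ≤ 0.1n. Let P' ∈ {−1,0,1}ⁿ be a vector with exactly k coordinates equal to −1. Define 𝒜_{P'} = {P ∈ {0,1}ⁿ : |{i : Pᵢ = P'ᵢ ∈ {0,1}}| > 0.9n or |{i : Pᵢ = 1 − P'ᵢ, P'ᵢ ∈ {0,1}}| > 0.9n}. Then |𝒜_{P'}| ≤ 2^{k + 1 + log n + (0.1n − k)·log((n−k)e/(0.1n−k))} ≤ 2^{0.477n}. -/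
/-!
A vector `P` with more than `0.9 n` agreements with `P'` is determined by its values on the `k`
unlabelled coordinates together with its set of disagreements among the `n - k` labelled ones, a
set of size `j < 0.1 n - k`; the same holds for the complement of `P'`. Hence
`|𝒜_{P'}| ≤ 2 ^ (k + 1) * ∑_{j < 0.1 n - k} C(n - k, j)`.

Each `C(t, j) ≤ (e t / j) ^ j`, and `x ↦ (e t / x) ^ x` increases up to `x = t`, so every term is at
most `(e t / μ) ^ μ` with `μ = 0.1 n - k`; there are at most `n` terms. This is the first bound.

The first bound exceeds `2 ^ (0.477 n)` for moderate `n`, so the second one uses instead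
`∑_{j ≤ m} C(t, j) * 9 ^ (t - m) ≤ 10 ^ t`, i.e. `∑_{j ≤ m} C(t, j) ≤ 2 ^ (3.322 m + 0.153 (t - m))`,
which is enough for `n ≥ 97`; the remaining cases are checked by evaluation.
-/

open Finset Real

theorem card_filter_powerset_card_lt_le {α : Type*} (T : Finset α) (M : ℕ) :
    #{D ∈ T.powerset | D.card < M} ≤ ∑ j ∈ range M, (#T).choose j := by
  classical
  calc #{D ∈ T.powerset | D.card < M}
      ≤ #((range M).biUnion (T.powersetCard ·)) := by
        refine card_le_card fun D hD => ?_
        simp only [mem_filter, mem_powerset] at hD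
        exact mem_biUnion.2 ⟨D.card, mem_range.2 hD.2, mem_powersetCard.2 ⟨hD.1, rfl⟩⟩
    _ ≤ ∑ j ∈ range M, #(T.powersetCard j) := card_biUnion_le
    _ = ∑ j ∈ range M, (#T).choose j := by simp only [card_powersetCard]

section Agreement

variable {ι : Type*} [Fintype ι] [DecidableEq ι]

theorem card_filter_lt_card_agree_le (P' : ι → Option Bool) (r : ℕ) :
    #{P : ι → Bool | r < #{i | P' i = some (P i)}} ≤
      2 ^ #{i | P' i = none} *
        ∑ j ∈ range (#{i | P' i ≠ none} - r), (#{i | P' i ≠ none}).choose j := by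
  set S : Finset ι := {i | P' i = none}
  set T : Finset ι := {i | P' i ≠ none}
  let Φ : (ι → Bool) → Finset ι × Finset ι := fun P => ({i ∈ S | P i}, {i ∈ T | P' i ≠ some (P i)})
  have hΦ : Function.Injective Φ := by
    intro P Q hPQ
    funext i
    have h₁ := congrArg (i ∈ ·.1) hPQ
    have h₂ := congrArg (i ∈ ·.2) hPQ
    simp only [Φ, S, T, mem_filter, mem_univ, true_and, eq_iff_iff] at h₁ h₂
    cases h : P' i <;> cases hp : P i <;> cases hq : Q i <;> simp_all
  have hmaps : ∀ P ∈ ({P | r < #{i | P' i = some (P i)}} : Finset (ι → Bool)),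
      Φ P ∈ S.powerset ×ˢ {D ∈ T.powerset | D.card < #T - r} := by
    intro P hP
    have hsplit := card_filter_add_card_filter_not (s := T) (fun i => P' i = some (P i))
    have hagree : {i ∈ T | P' i = some (P i)} = ({i | P' i = some (P i)} : Finset ι) := by
      ext i; simp +contextual [T]
    rw [hagree] at hsplit
    simp only [mem_filter, mem_univ, true_and] at hP
    simp only [Φ, mem_product, mem_powerset, mem_filter, filter_subset, true_and, ne_eq]
    omega
  calc #{P : ι → Bool | r < #{i | P' i = some (P i)}}
      ≤ #(S.powerset ×ˢ {D ∈ T.powerset | D.card < #T - r}) :=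
        card_le_card_of_injOn Φ (fun P hP => hmaps P hP) hΦ.injOn
    _ ≤ 2 ^ #S * ∑ j ∈ range (#T - r), (#T).choose j := by
        rw [card_product, card_powerset]
        exact Nat.mul_le_mul_left _ (card_filter_powerset_card_lt_le T _)

theorem card_filter_lt_card_agree_or_lt_card_agree_not_le (P' : ι → Option Bool) (r : ℕ) :
    #{P : ι → Bool | r < #{i | P' i = some (P i)} ∨ r < #{i | P' i = some (!P i)}} ≤
      2 ^ (#{i | P' i = none} + 1) *
        ∑ j ∈ range (#{i | P' i ≠ none} - r), (#{i | P' i ≠ none}).choose j := by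
  have hnot := card_filter_lt_card_agree_le (fun i => (P' i).map not) r
  have hmap : ∀ (o : Option Bool) (b : Bool), o.map not = some b ↔ o = some (!b) := by
    intro o b; cases o <;> cases b <;> simp
  simp only [hmap, Option.map_eq_none_iff, ne_eq] at hnot
  rw [filter_or, pow_succ, mul_right_comm, mul_two]
  exact (card_union_le _ _).trans (add_le_add (card_filter_lt_card_agree_le P' r) hnot)

end Agreement

theorem div_rpow_self_le_div_rpow_self {a b c : ℝ} (ha : 0 < a) (hab : a ≤ b)
    (hbc : exp 1 * b ≤ c) : (c / a) ^ a ≤ (c / b) ^ b := by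
  have hb : 0 < b := ha.trans_le hab
  have hc : 0 < c := (mul_pos (exp_pos 1) hb).trans_le hbc
  have hlog : 1 ≤ log (c / b) := by
    rw [le_log_iff_exp_le (by positivity), le_div_iff₀ hb]
    exact hbc
  rw [rpow_def_of_pos (by positivity), rpow_def_of_pos (by positivity), exp_le_exp]
  -- `a log (c/a) = a log (c/b) + a log (b/a)` and `a log (b/a) ≤ b - a ≤ (b - a) log (c/b)`.
  have hsplit : log (c / a) = log (c / b) + log (b / a) := by
    rw [← log_mul (by positivity) (by positivity), div_mul_div_cancel₀ hb.ne']
  have hba : a * log (b / a) ≤ b - a := by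
    have := mul_le_mul_of_nonneg_left (log_le_sub_one_of_pos (div_pos hb ha)) ha.le
    rwa [mul_sub, mul_div_cancel₀ _ ha.ne', mul_one] at this
  rw [hsplit]
  nlinarith [mul_le_mul_of_nonneg_left hlog (sub_nonneg.2 hab)]

theorem choose_le_mul_exp_div_rpow {t j : ℕ} {x : ℝ} (hjx : j ≤ x) (hxt : x ≤ t) :
    (t.choose j : ℝ) ≤ (t * exp 1 / x) ^ x := by
  rcases Nat.eq_zero_or_pos j with rfl | hj
  · rw [Nat.cast_zero] at hjx
    rcases hjx.eq_or_lt with hx | hx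
    · simp [← hx]
    · rw [Nat.choose_zero_right, Nat.cast_one]
      refine one_le_rpow ?_ hx.le
      rw [le_div_iff₀ hx, one_mul]
      nlinarith [add_one_le_exp 1]
  · have hj' : (0 : ℝ) < j := by exact_mod_cast hj
    calc (t.choose j : ℝ) ≤ (t : ℝ) ^ j / j.factorial := Nat.choose_le_pow_div j t
      _ ≤ (t * exp 1 / j) ^ j := by
        rw [div_le_iff₀ (by positivity), div_pow, mul_pow, exp_one_pow, div_mul_eq_mul_div,
          le_div_iff₀ (by positivity), mul_assoc]
        gcongr
        rw [← div_le_iff₀ (by positivity : (0 : ℝ) < j.factorial)]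
        exact pow_div_factorial_le_exp _ hj'.le j
      _ = (t * exp 1 / j) ^ (j : ℝ) := (rpow_natCast _ j).symm
      _ ≤ (t * exp 1 / x) ^ x :=
        div_rpow_self_le_div_rpow_self hj' hjx (by nlinarith [exp_pos 1])

theorem sum_range_choose_mul_pow_le {t m a : ℕ} (ha : 1 ≤ a) (hmt : m ≤ t) :
    (∑ j ∈ range (m + 1), t.choose j) * a ^ (t - m) ≤ (a + 1) ^ t := by
  calc (∑ j ∈ range (m + 1), t.choose j) * a ^ (t - m)
      ≤ ∑ j ∈ range (m + 1), 1 ^ j * a ^ (t - j) * t.choose j := by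
        rw [sum_mul]
        refine sum_le_sum fun j hj => ?_
        rw [one_pow, one_mul, mul_comm]
        have : j ≤ m := Nat.lt_succ_iff.1 (mem_range.1 hj)
        gcongr
    _ ≤ ∑ j ∈ range (t + 1), 1 ^ j * a ^ (t - j) * t.choose j :=
        sum_le_sum_of_subset (range_subset_range.2 (by omega))
    _ = (a + 1) ^ t := by rw [add_comm a 1, add_pow]; simp only [Nat.cast_id]

theorem sum_range_choose_pow_le_two_pow {t m : ℕ} (hmt : m ≤ t) :
    (∑ j ∈ range (m + 1), t.choose j) ^ 1000 ≤ 2 ^ (3322 * m + 153 * (t - m)) := by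
  have hsum := sum_range_choose_mul_pow_le (a := 9) (by norm_num) hmt
  obtain ⟨d, rfl⟩ := Nat.exists_eq_add_of_le hmt
  rw [Nat.add_sub_cancel_left] at hsum ⊢
  -- `10 ≤ 2 ^ 3.322` and `10 / 9 ≤ 2 ^ 0.153`
  have h10 : 10 ^ 1000 ≤ 2 ^ 3322 := by decide +kernel
  have h109 : 10 ^ 1000 ≤ 9 ^ 1000 * 2 ^ 153 := by decide +kernel
  refine Nat.le_of_mul_le_mul_right (c := 9 ^ (1000 * d)) ?_ (pow_pos (by norm_num) _)
  calc (∑ j ∈ range (m + 1), (m + d).choose j) ^ 1000 * 9 ^ (1000 * d)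
      = ((∑ j ∈ range (m + 1), (m + d).choose j) * 9 ^ d) ^ 1000 := by ring
    _ ≤ ((9 + 1) ^ (m + d)) ^ 1000 := by gcongr
    _ = (10 ^ 1000) ^ m * (10 ^ 1000) ^ d := by
        rw [← pow_mul, ← pow_mul, ← pow_mul, ← pow_add]; ring_nf
    _ ≤ (2 ^ 3322) ^ m * (9 ^ 1000 * 2 ^ 153) ^ d := by gcongr
    _ = 2 ^ (3322 * m + 153 * d) * 9 ^ (1000 * d) := by
        rw [mul_pow, ← pow_mul, ← pow_mul, ← pow_mul, pow_add]; ring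

theorem two_rpow_add_logb (a μ : ℝ) {x y : ℝ} (hx : 0 < x) (hy : 0 < y) :
    (2 : ℝ) ^ (a + logb 2 x + μ * logb 2 y) = 2 ^ a * (x * y ^ μ) := by
  rw [rpow_add two_pos, rpow_add two_pos, rpow_logb two_pos (by norm_num) hx, mul_comm μ,
    rpow_mul zero_le_two, rpow_logb two_pos (by norm_num) hy, mul_assoc]

theorem natCast_le_two_rpow_of_pow_le {x p q : ℕ} (hp : p ≠ 0) (h : x ^ p ≤ 2 ^ q) :
    (x : ℝ) ≤ 2 ^ ((q : ℝ) / p) := by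
  rw [← pow_le_pow_iff_left₀ x.cast_nonneg (rpow_nonneg zero_le_two _) hp,
    ← rpow_mul_natCast zero_le_two, div_mul_cancel₀ _ (Nat.cast_ne_zero.2 hp), rpow_natCast]
  exact_mod_cast h

theorem nine_tenths_mul_lt_iff {n a : ℕ} : (0.9 : ℝ) * n < a ↔ 9 * n / 10 < a := by
  rw [Nat.div_lt_iff_lt_mul (by norm_num), ← Nat.cast_lt (α := ℝ)]
  push_cast
  constructor <;> intro h <;> linarith

theorem two_pow_mul_sum_choose_le_two_rpow_logb (n k : ℕ) :
    ((2 ^ (k + 1) * ∑ j ∈ range (n - k - 9 * n / 10), (n - k).choose j : ℕ) : ℝ)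
      ≤ (2 : ℝ) ^ ((k : ℝ) + 1 + logb 2 n +
          (0.1 * n - k) * logb 2 (((n : ℝ) - k) * exp 1 / (0.1 * n - k))) := by
  set M := n - k - 9 * n / 10
  rcases Nat.eq_zero_or_pos M with hM | hM
  · rw [hM, sum_range_zero, mul_zero, Nat.cast_zero]
    positivity
  have hkn : 10 * k < n := by omega
  have hknR : 10 * (k : ℝ) < n := by exact_mod_cast hkn
  have hμ : 0 < 0.1 * (n : ℝ) - k := by linarith
  have ht : ((n - k : ℕ) : ℝ) = n - k := Nat.cast_sub (by omega)
  have hy : 0 < ((n : ℝ) - k) * exp 1 / (0.1 * n - k) :=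
    div_pos (mul_pos (by linarith) (exp_pos 1)) hμ
  have hterm : ∀ j ∈ range M,
      ((n - k).choose j : ℝ) ≤ (((n : ℝ) - k) * exp 1 / (0.1 * n - k)) ^ (0.1 * n - k : ℝ) := by
    intro j hj
    have hjk : 10 * (j + k) < n := by rw [mem_range] at hj; omega
    have hjkR : 10 * ((j : ℝ) + k) < n := by exact_mod_cast hjk
    rw [← ht]
    exact choose_le_mul_exp_div_rpow (by linarith) (by rw [ht]; linarith [k.cast_nonneg (α := ℝ)])
  have hsum : ((∑ j ∈ range M, (n - k).choose j : ℕ) : ℝ)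
      ≤ n * (((n : ℝ) - k) * exp 1 / (0.1 * n - k)) ^ (0.1 * n - k : ℝ) := by
    rw [Nat.cast_sum]
    refine (sum_le_card_nsmul _ _ _ hterm).trans ?_
    rw [card_range, nsmul_eq_mul]
    exact mul_le_mul_of_nonneg_right (by exact_mod_cast (show M ≤ n by omega))
      (rpow_nonneg hy.le _)
  have hpow : (2 : ℝ) ^ ((k : ℝ) + 1) = 2 ^ (k + 1) := by
    rw [← rpow_natCast]; push_cast; rfl
  rw [two_rpow_add_logb _ _ (by linarith) hy, hpow, Nat.cast_mul, Nat.cast_pow, Nat.cast_ofNat]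
  gcongr

theorem two_pow_mul_sum_choose_pow_le_of_lt : ∀ n < 97, 10 ≤ n → ∀ k ≤ n / 10,
    (2 ^ (k + 1) * ∑ j ∈ range (n - k - 9 * n / 10), (n - k).choose j) ^ 1000
      ≤ 2 ^ (477 * n) := by
  decide +kernel

theorem two_pow_mul_sum_choose_pow_le {n : ℕ} (hn : 10 ≤ n) (k : ℕ) :
    (2 ^ (k + 1) * ∑ j ∈ range (n - k - 9 * n / 10), (n - k).choose j) ^ 1000
      ≤ 2 ^ (477 * n) := by
  rcases Nat.eq_zero_or_pos (n - k - 9 * n / 10) with hM | hM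
  · simp [hM]
  rcases lt_or_ge n 97 with hsmall | hlarge
  · exact two_pow_mul_sum_choose_pow_le_of_lt n hsmall hn k (by omega)
  obtain ⟨m, hm⟩ : ∃ m, n - k - 9 * n / 10 = m + 1 := ⟨_, (Nat.succ_pred_eq_of_pos hM).symm⟩
  rw [hm, mul_pow, ← pow_mul]
  calc 2 ^ ((k + 1) * 1000) * (∑ j ∈ range (m + 1), (n - k).choose j) ^ 1000
      ≤ 2 ^ ((k + 1) * 1000) * 2 ^ (3322 * m + 153 * (n - k - m)) :=
        Nat.mul_le_mul_left _ (sum_range_choose_pow_le_two_pow (by omega))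
    _ ≤ 2 ^ (477 * n) := by
        rw [← pow_add]
        exact Nat.pow_le_pow_right (by norm_num) (by omega)

theorem two_pow_mul_sum_choose_le_two_rpow {n : ℕ} (hn : 10 ≤ n) (k : ℕ) :
    ((2 ^ (k + 1) * ∑ j ∈ range (n - k - 9 * n / 10), (n - k).choose j : ℕ) : ℝ)
      ≤ (2 : ℝ) ^ (0.477 * (n : ℝ)) := by
  convert natCast_le_two_rpow_of_pow_le (by norm_num) (two_pow_mul_sum_choose_pow_le hn k) using 2
  push_cast
  ring

open Classical in
theorem approx_partition_count_general (n k : ℕ) (hn : 10 ≤ n)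
    (P' : Fin n → Option Bool)
    (hkcard : (Finset.univ.filter (fun i => P' i = none)).card = k) :
    (((Finset.univ.filter (fun P : Fin n → Bool =>
          0.9 * (n : ℝ) < ((Finset.univ.filter (fun i => P' i = some (P i))).card : ℝ)
          ∨ 0.9 * (n : ℝ) <
              ((Finset.univ.filter (fun i => P' i = some (!P i))).card : ℝ))).card : ℝ)
        ≤ (2 : ℝ) ^ ((k : ℝ) + 1 + Real.logb 2 n +
            (0.1 * n - k) * Real.logb 2 (((n : ℝ) - k) * Real.exp 1 / (0.1 * n - k))))
    ∧ (((Finset.univ.filter (fun P : Fin n → Bool =>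
          0.9 * (n : ℝ) < ((Finset.univ.filter (fun i => P' i = some (P i))).card : ℝ)
          ∨ 0.9 * (n : ℝ) <
              ((Finset.univ.filter (fun i => P' i = some (!P i))).card : ℝ))).card : ℝ)
        ≤ (2 : ℝ) ^ (0.477 * (n : ℝ))) := by
  have hlabelled : #{i | P' i ≠ none} = n - k := by
    have := card_filter_add_card_filter_not (s := univ) (fun i => P' i = none)
    rw [card_univ, Fintype.card_fin, hkcard] at this
    simp only [ne_eq]
    omega
  have hcount := card_filter_lt_card_agree_or_lt_card_agree_not_le P' (9 * n / 10)
  simp only [← nine_tenths_mul_lt_iff, hkcard, hlabelled] at hcount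
  have hcountR := Nat.cast_le (α := ℝ) |>.2 hcount
  exact ⟨hcountR.trans (two_pow_mul_sum_choose_le_two_rpow_logb n k),
    hcountR.trans (two_pow_mul_sum_choose_le_two_rpow hn k)⟩

open Classical in
theorem approx_partition_count (n k : ℕ) (hn : 10 ≤ n) (hk : 10 * k ≤ n)
    (P' : Fin n → Option Bool)
    (hkcard : (Finset.univ.filter (fun i => P' i = none)).card = k) :
    (((Finset.univ.filter (fun P : Fin n → Bool =>
          0.9 * (n : ℝ) < ((Finset.univ.filter (fun i => P' i = some (P i))).card : ℝ)
          ∨ 0.9 * (n : ℝ) <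
              ((Finset.univ.filter (fun i => P' i = some (!P i))).card : ℝ))).card : ℝ)
        ≤ (2 : ℝ) ^ ((k : ℝ) + 1 + Real.logb 2 n +
            (0.1 * n - k) * Real.logb 2 (((n : ℝ) - k) * Real.exp 1 / (0.1 * n - k))))
    ∧ (((Finset.univ.filter (fun P : Fin n → Bool =>
          0.9 * (n : ℝ) < ((Finset.univ.filter (fun i => P' i = some (P i))).card : ℝ)
          ∨ 0.9 * (n : ℝ) <
              ((Finset.univ.filter (fun i => P' i = some (!P i))).card : ℝ))).card : ℝ)
        ≤ (2 : ℝ) ^ (0.477 * (n : ℝ))) :=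
  approx_partition_count_general n k hn P' hkcard
end
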